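/- arXiv:2603.05956 — 12 statements merged into one kernel-verified Lean document; each statement's English description precedes it below -/
import Mathlib

section
/- A balanced allocation A of m goods among n agents (where each agent receives exactly k = m/n goods) is fractionally Pareto optimal if and only if there exists a strictly positive weight vector α ∈ ℝ^n such that A maximizes the weighted utilitarian social welfare ∑_i α_i · v_i(A_i) over all balanced allocations. -/
/-!
Splitting every agent into `k` slots turns a balanced fractional allocation into a doubly
stochastic matrix, which by Birkhoff's theorem is a convex combination of permutation matrices,
i.e. of balanced allocations. So if `A` maximises the `α`-weighted welfare among balanced
allocations, it does so among balanced fractional allocations too, whereas a fractional Pareto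
improvement over `A` would raise the weighted welfare strictly.

Conversely, if `A` is fPO then the cone spanned by the utility gains `u(B) - u(A)` of the balanced
allocations `B` meets the nonnegative orthant only in `0`: a nonzero point there, normalised, is a
convex combination of balanced allocations that Pareto-improves `A`. This cone is finitely
generated, hence closed (Carathéodory), so it can be separated from the standard simplex; the
separating functional gives strictly positive weights `α` with `α ⬝ (u(B) - u(A)) ≤ 0` for every
`B` (Stiemke's theorem).
-/

open Finset

/-- A balanced allocation: an ordered partition of the goods where each agent
receives exactly `k` goods. -/
def IsBalanced (n m k : ℕ) (A : Fin n → Finset (Fin m)) : Prop :=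
  (∀ j : Fin m, ∃! i : Fin n, j ∈ A i) ∧ ∀ i : Fin n, (A i).card = k

/-- A balanced fractional allocation. -/
def IsFracBalanced (n m k : ℕ) (x : Fin n → Fin m → ℝ) : Prop :=
  (∀ i j, 0 ≤ x i j) ∧ (∀ i : Fin n, ∑ j : Fin m, x i j = (k : ℝ)) ∧
    (∀ j : Fin m, ∑ i : Fin n, x i j = 1)

/-- Fractional Pareto optimality among balanced (fractional) allocations. -/
def IsFPO (n m k : ℕ) (v : Fin n → Fin m → ℝ) (A : Fin n → Finset (Fin m)) : Prop :=
  ¬ ∃ x : Fin n → Fin m → ℝ, IsFracBalanced n m k x ∧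
    (∀ i : Fin n, ∑ j ∈ A i, v i j ≤ ∑ j : Fin m, v i j * x i j) ∧
    (∃ i : Fin n, ∑ j ∈ A i, v i j < ∑ j : Fin m, v i j * x i j)

section ConeHull

variable {E : Type*} [AddCommGroup E] [Module ℝ E] {ι : Type*}

lemma PointedCone.mem_hull_range_iff [Fintype ι] {g : ι → E} {x : E} :
    x ∈ PointedCone.hull ℝ (Set.range g) ↔ ∃ c : ι → ℝ, 0 ≤ c ∧ ∑ i, c i • g i = x := by
  rw [Submodule.mem_span_range_iff_exists_fun]
  constructor
  · rintro ⟨c, rfl⟩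
    exact ⟨fun i => c i, fun i => (c i).2, rfl⟩
  · rintro ⟨c, hc, rfl⟩
    exact ⟨fun i => ⟨c i, hc i⟩, rfl⟩

lemma exists_nonneg_support_ssubset_sum_smul_eq [Fintype ι] (g : ι → E) {c : ι → ℝ}
    (hc : 0 ≤ c) (hdep : ¬ LinearIndepOn ℝ g (Function.support c)) :
    ∃ c' : ι → ℝ, 0 ≤ c' ∧ Function.support c' ⊂ Function.support c ∧
      ∑ i, c' i • g i = ∑ i, c i • g i := by
  obtain ⟨a, ha_supp, ha_sum, ha_ne⟩ := linearDepOn_iff'.1 hdep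
  rw [Finsupp.linearCombination_apply, Finsupp.sum_fintype _ _ fun i => zero_smul ℝ (g i)]
    at ha_sum
  wlog hpos : ∃ i, 0 < a i generalizing a
  · refine this (-a) (by simpa using ha_supp) (by simp [ha_sum]) (neg_ne_zero.2 ha_ne) ?_
    obtain ⟨i, hi⟩ := Finsupp.ne_iff.1 ha_ne
    exact ⟨i, by simpa using (not_lt.1 fun h => hpos ⟨i, h⟩).lt_of_ne hi⟩
  have hsupp : ∀ i, a i ≠ 0 → c i ≠ 0 := fun i hi => ha_supp (Finsupp.mem_support_iff.2 hi)
  obtain ⟨i₀, hi₀, hmin⟩ := (univ.filter fun i => 0 < a i).exists_min_image (fun i => c i / a i)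
    (by simpa [Finset.Nonempty] using hpos)
  simp only [mem_filter, mem_univ, true_and] at hi₀ hmin
  set r := c i₀ / a i₀
  refine ⟨c - r • a, fun i => ?_, ?_, ?_⟩
  · rcases le_or_gt (a i) 0 with h | h
    · have : r * a i ≤ 0 := mul_nonpos_of_nonneg_of_nonpos (div_nonneg (hc i₀) hi₀.le) h
      simp only [Pi.zero_apply, Pi.sub_apply, Pi.smul_apply, smul_eq_mul]
      linarith [show 0 ≤ c i from hc i]
    · simpa [sub_nonneg] using (le_div_iff₀ h).1 (hmin i h)
  · refine ssubset_iff_subset_not_superset.2 ⟨fun i hi => ?_, fun h => h (hsupp i₀ hi₀.ne') ?_⟩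
    · by_contra hci
      simp only [Function.mem_support, ne_eq, not_not] at hci
      have : a i = 0 := by by_contra h; exact hsupp i h hci
      simp [hci, this] at hi
    · simp [r, hi₀.ne']
  · simp [sub_smul, Finset.sum_sub_distrib, mul_smul, ← Finset.smul_sum, ha_sum]

/-- Carathéodory's theorem for cones. -/
lemma exists_nonneg_linearIndepOn_support_sum_smul_eq [Fintype ι] (g : ι → E) {c : ι → ℝ}
    (hc : 0 ≤ c) : ∃ c' : ι → ℝ, 0 ≤ c' ∧ LinearIndepOn ℝ g (Function.support c') ∧
      ∑ i, c' i • g i = ∑ i, c i • g i := by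
  suffices ∀ s : Set ι, ∀ c : ι → ℝ, 0 ≤ c → Function.support c = s →
      ∃ c' : ι → ℝ, 0 ≤ c' ∧ LinearIndepOn ℝ g (Function.support c') ∧
        ∑ i, c' i • g i = ∑ i, c i • g i from this _ c hc rfl
  intro s
  induction s using WellFoundedLT.induction with
  | _ s ih =>
    rintro c hc rfl
    by_cases hli : LinearIndepOn ℝ g (Function.support c)
    · exact ⟨c, hc, hli, rfl⟩
    obtain ⟨c', hc', hlt, hsum⟩ := exists_nonneg_support_ssubset_sum_smul_eq g hc hli
    obtain ⟨c'', hc'', hli'', hsum''⟩ := ih _ hlt c' hc' rfl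
    exact ⟨c'', hc'', hli'', hsum''.trans hsum⟩

variable [TopologicalSpace E] [IsTopologicalAddGroup E] [ContinuousSMul ℝ E] [T2Space E]

lemma PointedCone.isClosed_hull_range [Finite ι] (g : ι → E) :
    IsClosed (PointedCone.hull ℝ (Set.range g) : Set E) := by
  classical
  cases nonempty_fintype ι
  let L (s : Set ι) : (s → ℝ) →ₗ[ℝ] E := Fintype.linearCombination ℝ fun i : s => g i
  have hcover : (PointedCone.hull ℝ (Set.range g) : Set E) =
      ⋃ (s : Set ι) (_ : LinearIndepOn ℝ g s), L s '' Set.Ici 0 := by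
    refine Set.Subset.antisymm (fun x hx => ?_) ?_
    · obtain ⟨c, hc, rfl⟩ := PointedCone.mem_hull_range_iff.1 hx
      obtain ⟨c', hc', hli, hsum⟩ := exists_nonneg_linearIndepOn_support_sum_smul_eq g hc
      refine Set.mem_biUnion (x := Function.support c') hli ⟨fun i => c' i, fun i => hc' i, ?_⟩
      rw [← hsum, Fintype.linearCombination_apply, Finset.sum_set_coe (f := fun i => c' i • g i)]
      exact Finset.sum_subset (subset_univ _) fun i _ hi => by simp_all
    · simp only [Set.iUnion_subset_iff, Set.image_subset_iff]
      intro s _ c hc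
      exact Submodule.sum_mem _ fun i _ =>
        PointedCone.smul_mem _ (hc i) (PointedCone.subset_hull ⟨i, rfl⟩)
  rw [hcover]
  refine isClosed_iUnion_of_finite fun s => isClosed_iUnion_of_finite fun hli => ?_
  have hinj : LinearMap.ker (L s) = ⊥ :=
    LinearMap.ker_eq_bot.2 (linearIndependent_iff_injective_fintypeLinearCombination.1 hli)
  exact (LinearMap.isClosedEmbedding_of_injective hinj).isClosedMap _ isClosed_Ici

end ConeHull

/-- Stiemke's transposition theorem. -/
theorem exists_pos_sum_mul_nonpos_of_hull_nonneg_eq_zero {ι κ : Type*} [Finite ι] [Fintype κ]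
    (g : ι → κ → ℝ) (h : ∀ x ∈ PointedCone.hull ℝ (Set.range g), 0 ≤ x → x = 0) :
    ∃ α : κ → ℝ, (∀ i, 0 < α i) ∧ ∀ b, ∑ i, α i * g b i ≤ 0 := by
  classical
  let C : ProperCone ℝ (κ → ℝ) :=
    ⟨PointedCone.hull ℝ (Set.range g), PointedCone.isClosed_hull_range g⟩
  have hdisj : Disjoint (stdSimplex ℝ κ) C := by
    refine Set.disjoint_left.2 fun x hx hxC => ?_
    have hx0 : x = 0 := h x hxC hx.1
    simpa [hx0] using hx.2
  obtain ⟨f, hfC, hfS⟩ :=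
    C.hyperplane_separation (convex_stdSimplex ℝ κ) (isCompact_stdSimplex ℝ κ) hdisj
  refine ⟨fun i => -f (fun j => if i = j then 1 else 0),
    fun i => neg_pos.2 (hfS _ (ite_eq_mem_stdSimplex ℝ i)), fun b => ?_⟩
  have hb := hfC (g b) (PointedCone.subset_hull ⟨b, rfl⟩)
  rw [← ContinuousLinearMap.coe_coe, LinearMap.pi_apply_eq_sum_univ] at hb
  simpa [mul_comm] using hb

section Allocation

variable {n m k : ℕ}

def allocMatrix (A : Fin n → Finset (Fin m)) : Fin n → Fin m → ℝ :=
  fun i j => if j ∈ A i then 1 else 0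

lemma sum_mul_allocMatrix (v : Fin n → Fin m → ℝ) (A : Fin n → Finset (Fin m)) (i : Fin n) :
    ∑ j, v i j * allocMatrix A i j = ∑ j ∈ A i, v i j := by
  simp [allocMatrix, Finset.sum_ite_mem]

lemma IsBalanced.isFracBalanced_allocMatrix {A : Fin n → Finset (Fin m)}
    (hA : IsBalanced n m k A) : IsFracBalanced n m k (allocMatrix A) := by
  refine ⟨fun i j => by unfold allocMatrix; positivity, fun i => ?_, fun j => ?_⟩
  · simp [allocMatrix, Finset.sum_ite_mem, hA.2 i]
  · obtain ⟨i₀, hi₀, huniq⟩ := hA.1 j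
    refine (Finset.sum_eq_single i₀ (fun i _ hi => ?_) (by simp)).trans (by simp [allocMatrix, hi₀])
    exact if_neg fun hj => hi (huniq i hj)

lemma convex_setOf_isFracBalanced : Convex ℝ {x | IsFracBalanced n m k x} := by
  rintro x ⟨hx0, hxr, hxc⟩ y ⟨hy0, hyr, hyc⟩ a b ha hb hab
  refine ⟨fun i j => ?_, fun i => ?_, fun j => ?_⟩
  · simp only [Pi.add_apply, Pi.smul_apply, smul_eq_mul]
    have := hx0 i j; have := hy0 i j; positivity
  · simp [Finset.sum_add_distrib, ← Finset.mul_sum, hxr, hyr, ← add_mul, hab]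
  · simp [Finset.sum_add_distrib, ← Finset.mul_sum, hxc, hyc, hab]

def blockAlloc (τ : Fin n × Fin k ≃ Fin m) : Fin n → Finset (Fin m) :=
  fun i => univ.filter fun j => (τ.symm j).1 = i

lemma mem_blockAlloc {τ : Fin n × Fin k ≃ Fin m} {i : Fin n} {j : Fin m} :
    j ∈ blockAlloc τ i ↔ (τ.symm j).1 = i := by
  simp [blockAlloc]

lemma isBalanced_blockAlloc (τ : Fin n × Fin k ≃ Fin m) : IsBalanced n m k (blockAlloc τ) := by
  refine ⟨fun j => ⟨(τ.symm j).1, mem_blockAlloc.2 rfl, fun i hi => (mem_blockAlloc.1 hi).symm⟩,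
    fun i => ?_⟩
  simpa using Finset.card_nbij' (s := blockAlloc τ i) (t := univ) (fun j => (τ.symm j).2)
    (fun c => τ (i, c)) (by simp) (by simp [Set.MapsTo, mem_blockAlloc])
    (fun j hj => by simp [← mem_blockAlloc.1 hj]) (fun c _ => by simp)

def mergeSlots (e : Fin n × Fin k ≃ Fin m) : Matrix (Fin m) (Fin m) ℝ →ₗ[ℝ] Fin n → Fin m → ℝ where
  toFun y i j := ∑ c, y (e (i, c)) j
  map_add' y z := by ext i j; simp [Finset.sum_add_distrib]
  map_smul' a y := by ext i j; simp [Finset.mul_sum]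

lemma mergeSlots_permMatrix (e : Fin n × Fin k ≃ Fin m) (σ : Equiv.Perm (Fin m)) :
    mergeSlots e (σ.permMatrix ℝ) = allocMatrix (blockAlloc (e.trans σ)) := by
  ext i j
  obtain ⟨⟨i', c'⟩, rfl⟩ := (e.trans σ).surjective j
  by_cases h : i = i' <;>
    simp [mergeSlots, Equiv.Perm.permMatrix, PEquiv.toMatrix_apply, allocMatrix, mem_blockAlloc,
      h, eq_comm]

lemma IsFracBalanced.mem_convexHull_allocMatrix (hm : m = n * k) {x : Fin n → Fin m → ℝ}
    (hx : IsFracBalanced n m k x) :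
    x ∈ convexHull ℝ (allocMatrix '' {B | IsBalanced n m k B}) := by
  obtain ⟨hx0, hrow, hcol⟩ := hx
  let e : Fin n × Fin k ≃ Fin m := finProdFinEquiv.trans (finCongr hm.symm)
  have hk (j : Fin m) : (k : ℝ) ≠ 0 := by
    have := (e.symm j).2.pos
    positivity
  -- split every agent into `k` slots sharing her fractional bundle equally
  let y : Matrix (Fin m) (Fin m) ℝ := Matrix.of fun p j => x (e.symm p).1 j / k
  have hy : y ∈ doublyStochastic ℝ (Fin m) := by
    refine mem_doublyStochastic_iff_sum.2 ⟨fun p j => div_nonneg (hx0 _ _) k.cast_nonneg,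
      fun p => ?_, fun j => ?_⟩
    · simp [y, ← Finset.sum_div, hrow, hk p]
    · rw [← e.sum_comp]
      simp [y, Fintype.sum_prod_type, mul_div_cancel₀ _ (hk j), hcol]
  have hxy : mergeSlots e y = x := by
    ext i j
    simp [mergeSlots, y, mul_div_cancel₀ _ (hk j)]
  rw [← SetLike.mem_coe, doublyStochastic_eq_convexHull_permMatrix] at hy
  rw [← hxy]
  refine convexHull_mono ?_ (LinearMap.image_convexHull (mergeSlots e) _ ▸
    Set.mem_image_of_mem _ hy)
  rintro _ ⟨_, ⟨σ, rfl⟩, rfl⟩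
  exact ⟨_, isBalanced_blockAlloc _, (mergeSlots_permMatrix e σ).symm⟩

end Allocation

section Welfare

variable {n m k : ℕ} {v : Fin n → Fin m → ℝ} {A : Fin n → Finset (Fin m)}

theorem isFPO_of_forall_welfare_le (hm : m = n * k) {α : Fin n → ℝ} (hα : ∀ i, 0 < α i)
    (hmax : ∀ B : Fin n → Finset (Fin m), IsBalanced n m k B →
      ∑ i, α i * ∑ j ∈ B i, v i j ≤ ∑ i, α i * ∑ j ∈ A i, v i j) :
    IsFPO n m k v A := by
  rintro ⟨x, hx, hdom, i₀, hi₀⟩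
  have hle : ∑ i, α i * ∑ j, v i j * x i j ≤ ∑ i, α i * ∑ j ∈ A i, v i j := by
    have hconv : Convex ℝ {y : Fin n → Fin m → ℝ |
        ∑ i, α i * ∑ j, v i j * y i j ≤ ∑ i, α i * ∑ j ∈ A i, v i j} :=
      convex_halfSpace_le ⟨fun y z => by simp [mul_add, Finset.sum_add_distrib],
        fun a y => by simp [Finset.mul_sum, mul_left_comm]⟩ _
    refine convexHull_min ?_ hconv (hx.mem_convexHull_allocMatrix hm)
    rintro _ ⟨B, hB, rfl⟩
    simpa [sum_mul_allocMatrix] using hmax B hB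
  have hlt : ∑ i, α i * ∑ j ∈ A i, v i j < ∑ i, α i * ∑ j, v i j * x i j :=
    Finset.sum_lt_sum (fun i _ => mul_le_mul_of_nonneg_left (hdom i) (hα i).le)
      ⟨i₀, mem_univ _, mul_lt_mul_of_pos_left hi₀ (hα i₀)⟩
  exact hle.not_gt hlt

def utilityGain (v : Fin n → Fin m → ℝ) (A B : Fin n → Finset (Fin m)) : Fin n → ℝ :=
  fun i => ∑ j ∈ B i, v i j - ∑ j ∈ A i, v i j

lemma IsFPO.eq_zero_of_mem_hull_utilityGain (hA : IsFPO n m k v A) {g : Fin n → ℝ}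
    (hg : g ∈ PointedCone.hull ℝ
      (Set.range fun B : {B // IsBalanced n m k B} => utilityGain v A B.1))
    (hg0 : 0 ≤ g) : g = 0 := by
  classical
  obtain ⟨c, hc, rfl⟩ := PointedCone.mem_hull_range_iff.1 hg
  by_contra hne
  set s := ∑ B, c B
  have hs : 0 < s := by
    refine (Finset.sum_nonneg fun B _ => hc B).lt_of_ne fun hs => hne ?_
    have := (Finset.sum_eq_zero_iff_of_nonneg fun B _ => hc B).1 hs.symm
    simp [this]
  -- the average of the balanced allocations weighted by `c` dominates `A`
  let y : Fin n → Fin m → ℝ := ∑ B, (c B / s) • allocMatrix B.1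
  have hy : IsFracBalanced n m k y :=
    convex_setOf_isFracBalanced.sum_mem (fun B _ => div_nonneg (hc B) hs.le)
      (by rw [← Finset.sum_div, div_self hs.ne']) fun B _ => B.2.isFracBalanced_allocMatrix
  have hutil (i : Fin n) :
      ∑ j, v i j * y i j = ∑ j ∈ A i, v i j + (∑ B, c B • utilityGain v A B.1) i / s := by
    have hy_util : ∑ j, v i j * y i j = ∑ B, c B / s * ∑ j ∈ B.1 i, v i j := calc
      _ = ∑ j, ∑ B, c B / s * (v i j * allocMatrix B.1 i j) := by
        simp [y, Finset.sum_apply, Finset.mul_sum, mul_left_comm]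
      _ = _ := by
        rw [Finset.sum_comm]
        simp [← Finset.mul_sum, sum_mul_allocMatrix]
    have hgain : (∑ B, c B • utilityGain v A B.1) i =
        ∑ B, c B * ∑ j ∈ B.1 i, v i j - s * ∑ j ∈ A i, v i j := by
      simp [utilityGain, Finset.sum_apply, mul_sub, Finset.sum_sub_distrib, ← Finset.sum_mul, s]
    rw [hy_util, hgain]
    simp_rw [div_mul_eq_mul_div, ← Finset.sum_div]
    field_simp
    ring
  obtain ⟨i₀, hi₀⟩ : ∃ i, (∑ B, c B • utilityGain v A B.1) i ≠ 0 := by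
    by_contra! h
    exact hne (funext h)
  refine hA ⟨y, hy, fun i => ?_, i₀, ?_⟩
  · rw [hutil]
    exact le_add_of_nonneg_right (div_nonneg (hg0 i) hs.le)
  · rw [hutil]
    exact lt_add_of_pos_right _ (div_pos ((hg0 i₀).lt_of_ne' hi₀) hs)

end Welfare

theorem stmt0_general (n m k : ℕ) (hm : m = n * k)
    (v : Fin n → Fin m → ℝ)
    (A : Fin n → Finset (Fin m)) :
    IsFPO n m k v A ↔
      ∃ α : Fin n → ℝ, (∀ i, 0 < α i) ∧
        ∀ B : Fin n → Finset (Fin m), IsBalanced n m k B →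
          ∑ i : Fin n, α i * ∑ j ∈ B i, v i j ≤ ∑ i : Fin n, α i * ∑ j ∈ A i, v i j := by
  constructor
  · intro hA
    obtain ⟨α, hα, hgain⟩ := exists_pos_sum_mul_nonpos_of_hull_nonneg_eq_zero _
      fun g hg hg0 => hA.eq_zero_of_mem_hull_utilityGain hg hg0
    refine ⟨α, hα, fun B hB => ?_⟩
    simpa [utilityGain, mul_sub, Finset.sum_sub_distrib] using hgain ⟨B, hB⟩
  · rintro ⟨α, hα, hmax⟩
    exact isFPO_of_forall_welfare_le hm hα hmax

/-- A balanced allocation is fPO iff it maximizes a strictly positively weighted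
utilitarian social welfare over all balanced allocations. -/
theorem stmt0 (n m k : ℕ) (hn : 0 < n) (hm : m = n * k)
    (v : Fin n → Fin m → ℝ) (hv : ∀ i j, 0 ≤ v i j)
    (A : Fin n → Finset (Fin m)) (hA : IsBalanced n m k A) :
    IsFPO n m k v A ↔
      ∃ α : Fin n → ℝ, (∀ i, 0 < α i) ∧
        ∀ B : Fin n → Finset (Fin m), IsBalanced n m k B →
          ∑ i : Fin n, α i * ∑ j ∈ B i, v i j ≤ ∑ i : Fin n, α i * ∑ j ∈ A i, v i j :=
  stmt0_general n m k hm v A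
end

section
/- Let A be a balanced allocation that is an optimal solution of the LP maximizing ∑_i ∑_j α_i v_{ij} x_{ij} over balanced fractional allocations, and let (q, p) ∈ ℝ^N × ℝ^M be an optimal dual solution with q_i ≥ 0 for all i. If A is p-EF1 (i.e., p(A_i) ≥ p(A_{i'}) − max_{j∈A_{i'}} p_j for all agents i, i'), then A is EF1. -/
open Finset

/-- EF1: each agent prefers their own bundle after removing one good from
any other agent's (nonempty) bundle. -/
def IsEF1 (n m : ℕ) (v : Fin n → Fin m → ℝ) (A : Fin n → Finset (Fin m)) : Prop :=
  ∀ i i' : Fin n, A i' = ∅ ∨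
    ∃ j ∈ A i', ∑ j' ∈ (A i').erase j, v i j' ≤ ∑ j' ∈ A i, v i j'

/-!
Summing the dual constraints `q i + p j ≥ α i * v i j` over the allocated pairs `j ∈ A i` gives
exactly the dual objective `k ∑ q + ∑ p`, which by strong duality equals the primal value of `A`;
hence every constraint on an allocated pair is tight and `α i * v i (A i) = k q i + p (A i)`.
For any other bundle, dual feasibility gives `α i * v i S ≤ |S| q i + p S`. Removing from
`A i'` a good of largest price leaves `k - 1 ≤ k` goods, and `p`-EF1 bounds their price by
`p (A i)`; as `q i ≥ 0` and `α i > 0` this yields EF1.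
-/

theorem sum_sum_eq_sum_of_existsUnique_mem {ι γ M : Type*} [Fintype ι] [Fintype γ]
    [AddCommMonoid M] {A : ι → Finset γ} (hA : ∀ j, ∃! i, j ∈ A i) (f : γ → M) :
    ∑ i, ∑ j ∈ A i, f j = ∑ j, f j := by
  classical
  have hdisj : ((univ : Finset ι) : Set ι).PairwiseDisjoint A := fun a _ b _ hab =>
    disjoint_left.mpr fun j hja hjb => hab ((hA j).unique hja hjb)
  have hcover : univ.biUnion A = univ := by
    ext j
    simpa using (hA j).exists
  rw [← sum_biUnion hdisj, hcover]

section Allocation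

variable {n m k : ℕ} {v : Fin n → Fin m → ℝ} {α : Fin n → ℝ} {A : Fin n → Finset (Fin m)}
  {q : Fin n → ℝ} {p : Fin m → ℝ}

theorem IsBalanced.sum_sum_dual_eq (hA : IsBalanced n m k A) :
    ∑ i, ∑ j ∈ A i, (q i + p j) = (k : ℝ) * ∑ i, q i + ∑ j, p j := by
  simp only [sum_add_distrib, sum_const, hA.2, nsmul_eq_mul, mul_sum,
    sum_sum_eq_sum_of_existsUnique_mem hA.1]

theorem IsBalanced.dual_tight_of_mem (hA : IsBalanced n m k A)
    (hfeas : ∀ i j, α i * v i j ≤ q i + p j)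
    (hdualopt : (k : ℝ) * ∑ i, q i + ∑ j, p j = ∑ i, α i * ∑ j ∈ A i, v i j)
    {i : Fin n} {j : Fin m} (hj : j ∈ A i) :
    q i + p j = α i * v i j := by
  have hslack_nonneg : ∀ i j, 0 ≤ q i + p j - α i * v i j := fun i j => sub_nonneg.mpr (hfeas i j)
  have hslack_zero : ∑ i, ∑ j ∈ A i, (q i + p j - α i * v i j) = 0 := by
    simp only [sum_sub_distrib]
    rw [hA.sum_sum_dual_eq, hdualopt, sub_eq_zero]
    simp only [mul_sum]
  have hrow := (sum_eq_zero_iff_of_nonneg fun i _ => sum_nonneg fun j _ =>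
    hslack_nonneg i j).mp hslack_zero i (mem_univ i)
  linarith [(sum_eq_zero_iff_of_nonneg fun j _ => hslack_nonneg i j).mp hrow j hj]

theorem IsBalanced.mul_sum_eq_dual (hA : IsBalanced n m k A)
    (hfeas : ∀ i j, α i * v i j ≤ q i + p j)
    (hdualopt : (k : ℝ) * ∑ i, q i + ∑ j, p j = ∑ i, α i * ∑ j ∈ A i, v i j) (i : Fin n) :
    α i * ∑ j ∈ A i, v i j = k * q i + ∑ j ∈ A i, p j := by
  rw [mul_sum, ← hA.2 i, ← nsmul_eq_mul, ← sum_const, ← sum_add_distrib]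
  exact sum_congr rfl fun j hj => (hA.dual_tight_of_mem hfeas hdualopt hj).symm

end Allocation

theorem mul_sum_le_card_mul_add_sum {γ : Type*} {a q : ℝ} {v p : γ → ℝ}
    (hfeas : ∀ j, a * v j ≤ q + p j) (S : Finset γ) :
    a * ∑ j ∈ S, v j ≤ #S * q + ∑ j ∈ S, p j := by
  rw [mul_sum, ← nsmul_eq_mul, ← sum_const, ← sum_add_distrib]
  exact sum_le_sum fun j _ => hfeas j

theorem stmt2_general (n m k : ℕ)
    (v : Fin n → Fin m → ℝ)
    (α : Fin n → ℝ) (hα : ∀ i, 0 < α i)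
    (A : Fin n → Finset (Fin m)) (hA : IsBalanced n m k A)
    (q : Fin n → ℝ) (p : Fin m → ℝ)
    (hq : ∀ i, 0 ≤ q i)
    (hfeas : ∀ i j, α i * v i j ≤ q i + p j)
    (hdualopt : (k : ℝ) * ∑ i : Fin n, q i + ∑ j : Fin m, p j =
      ∑ i : Fin n, α i * ∑ j ∈ A i, v i j)
    (hpEF1 : ∀ (i i' : Fin n) (h : (A i').Nonempty),
      (∑ j ∈ A i', p j) - (A i').sup' h p ≤ ∑ j ∈ A i, p j) :
    IsEF1 n m v A := by
  intro i i'
  refine (eq_empty_or_nonempty (A i')).imp id fun hne => ?_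
  obtain ⟨j, hj, hmax⟩ := exists_mem_eq_sup' hne p
  refine ⟨j, hj, le_of_mul_le_mul_left ?_ (hα i)⟩
  have hcard : (#((A i').erase j) : ℝ) ≤ k := by
    exact_mod_cast (card_le_card (erase_subset j (A i'))).trans_eq (hA.2 i')
  have hprice : ∑ j' ∈ (A i').erase j, p j' ≤ ∑ j' ∈ A i, p j' := by
    rw [sum_erase_eq_sub hj, ← hmax]
    exact hpEF1 i i' hne
  calc α i * ∑ j' ∈ (A i').erase j, v i j'
      ≤ #((A i').erase j) * q i + ∑ j' ∈ (A i').erase j, p j' :=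
        mul_sum_le_card_mul_add_sum (hfeas i) _
    _ ≤ k * q i + ∑ j' ∈ A i, p j' := add_le_add (mul_le_mul_of_nonneg_right hcard (hq i)) hprice
    _ = α i * ∑ j' ∈ A i, v i j' := (hA.mul_sum_eq_dual hfeas hdualopt i).symm

/-- If a balanced allocation `A` is optimal for the weighted-welfare LP,
`(q, p)` is an optimal dual solution with `q ≥ 0`, and `A` is `p`-EF1,
then `A` is EF1. -/
theorem stmt2 (n m k : ℕ) (hm : m = n * k)
    (v : Fin n → Fin m → ℝ) (hv : ∀ i j, 0 ≤ v i j)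
    (α : Fin n → ℝ) (hα : ∀ i, 0 < α i)
    (A : Fin n → Finset (Fin m)) (hA : IsBalanced n m k A)
    (hopt : ∀ x : Fin n → Fin m → ℝ, IsFracBalanced n m k x →
      ∑ i : Fin n, ∑ j : Fin m, α i * v i j * x i j ≤
        ∑ i : Fin n, α i * ∑ j ∈ A i, v i j)
    (q : Fin n → ℝ) (p : Fin m → ℝ)
    (hq : ∀ i, 0 ≤ q i)
    (hfeas : ∀ i j, α i * v i j ≤ q i + p j)
    (hdualopt : (k : ℝ) * ∑ i : Fin n, q i + ∑ j : Fin m, p j =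
      ∑ i : Fin n, α i * ∑ j ∈ A i, v i j)
    (hpEF1 : ∀ (i i' : Fin n) (h : (A i').Nonempty),
      (∑ j ∈ A i', p j) - (A i').sup' h p ≤ ∑ j ∈ A i, p j) :
    IsEF1 n m v A :=
  stmt2_general n m k v α hα A hA q p hq hfeas hdualopt hpEF1
end

section
/- Suppose j ∈ A_i implies q_i + p_j = α_i v_{ij} for nonnegative duals (q,p) satisfying q_i + p_j ≥ α_i v_{ij} for all i, j, where α_i > 0 and |A_i| = k for all i. Then for any agents i, i' and any good j* ∈ argmax_{j ∈ A_{i'}} p_j, if p(A_i) ≥ p(A_{i'}) − p_{j*}, then v_i(A_i) ≥ v_i(A_{i'} \ {j*}). -/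
open Finset

/-!
Summing the dual constraints over a bundle of goods bounds its weighted value by the bundle's
dual cost `|X| q_i + p(X)`, with equality on agent `i`'s own bundle. Dropping `j*` from `A_{i'}`
lowers its cost to `(k - 1) q_i + p(A_{i'}) - p_{j*} ≤ k q_i + p(A_i)`, the cost of `A_i`.
-/

section DualCost

variable {ι M : Type*} [AddCommMonoid M] {s : Finset ι} {a p : ι → M} {q : M}

theorem sum_le_card_nsmul_add_sum [PartialOrder M] [IsOrderedAddMonoid M]
    (h : ∀ j ∈ s, a j ≤ q + p j) :
    ∑ j ∈ s, a j ≤ #s • q + ∑ j ∈ s, p j :=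
  calc ∑ j ∈ s, a j ≤ ∑ j ∈ s, (q + p j) := sum_le_sum h
    _ = #s • q + ∑ j ∈ s, p j := by rw [sum_add_distrib, sum_const]

theorem sum_eq_card_nsmul_add_sum (h : ∀ j ∈ s, q + p j = a j) :
    ∑ j ∈ s, a j = #s • q + ∑ j ∈ s, p j := by
  rw [← sum_const, ← sum_add_distrib]
  exact (sum_congr rfl h).symm

end DualCost

theorem stmt3_general (n m k : ℕ)
    (v : Fin n → Fin m → ℝ)
    (α : Fin n → ℝ) (hα : ∀ i, 0 < α i)
    (A : Fin n → Finset (Fin m)) (hcard : ∀ i, (A i).card = k)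
    (q : Fin n → ℝ) (p : Fin m → ℝ) (hq : ∀ i, 0 ≤ q i)
    (hfeas : ∀ i j, α i * v i j ≤ q i + p j)
    (hcs : ∀ (i : Fin n), ∀ j ∈ A i, q i + p j = α i * v i j)
    (i i' : Fin n) (jstar : Fin m) (hjstar : jstar ∈ A i')
    (hp : (∑ j ∈ A i', p j) - p jstar ≤ ∑ j ∈ A i, p j) :
    ∑ j ∈ (A i').erase jstar, v i j ≤ ∑ j ∈ A i, v i j := by
  rw [← mul_le_mul_iff_right₀ (hα i), mul_sum, mul_sum]
  have hcard_erase : #((A i').erase jstar) + 1 = #(A i) := by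
    rw [card_erase_add_one hjstar, hcard, hcard]
  calc ∑ j ∈ (A i').erase jstar, α i * v i j
      ≤ #((A i').erase jstar) • q i + ∑ j ∈ (A i').erase jstar, p j :=
        sum_le_card_nsmul_add_sum fun j _ => hfeas i j
    _ ≤ #(A i) • q i + ∑ j ∈ A i, p j := by
        rw [← hcard_erase, succ_nsmul, sum_erase_eq_sub hjstar]
        linarith [hq i]
    _ = ∑ j ∈ A i, α i * v i j := (sum_eq_card_nsmul_add_sum (hcs i)).symm

/-- Complementary-slackness duals turn a price-EF1 comparison into a value
comparison: if `p(A_i) ≥ p(A_{i'}) − p_{j*}` for a maximum-price good `j*` of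
`A_{i'}`, then `v_i(A_i) ≥ v_i(A_{i'} \ {j*})`. -/
theorem stmt3 (n m k : ℕ)
    (v : Fin n → Fin m → ℝ) (hv : ∀ i j, 0 ≤ v i j)
    (α : Fin n → ℝ) (hα : ∀ i, 0 < α i)
    (A : Fin n → Finset (Fin m)) (hcard : ∀ i, (A i).card = k)
    (q : Fin n → ℝ) (p : Fin m → ℝ) (hq : ∀ i, 0 ≤ q i)
    (hfeas : ∀ i j, α i * v i j ≤ q i + p j)
    (hcs : ∀ (i : Fin n), ∀ j ∈ A i, q i + p j = α i * v i j)
    (i i' : Fin n) (jstar : Fin m) (hjstar : jstar ∈ A i')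
    (hmax : ∀ j ∈ A i', p j ≤ p jstar)
    (hp : (∑ j ∈ A i', p j) - p jstar ≤ ∑ j ∈ A i, p j) :
    ∑ j ∈ (A i').erase jstar, v i j ≤ ∑ j ∈ A i, v i j :=
  stmt3_general n m k v α hα A hcard q p hq hfeas hcs i i' jstar hjstar hp
end

section
/- In the dummy-goods extension of an unconstrained instance, if a balanced allocation (B_1,...,B_n) of M ∪ M' is fractionally Pareto optimal among balanced allocations, then the restricted allocation (B_1 ∩ M, ..., B_n ∩ M) is fractionally Pareto optimal among all (unconstrained) allocations of M. -/
open Finset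

/-- Extended valuation: original goods keep their value, dummy goods are worth 0. -/
def extv (n m m' : ℕ) (v : Fin n → Fin m → ℝ) (i : Fin n) : Fin m ⊕ Fin m' → ℝ :=
  Sum.elim (v i) (fun _ => 0)

/-- In the dummy-goods extension, if a balanced allocation `B` of `M ∪ M'` is
fPO among balanced fractional allocations, then its restriction to `M` is fPO
among all (unconstrained) fractional allocations of `M`. -/
theorem stmt5 (n m : ℕ) (hn : 0 < n) (hm : 0 < m)
    (v : Fin n → Fin m → ℝ) (hv : ∀ i j, 0 ≤ v i j)
    (B : Fin n → Finset (Fin m ⊕ Fin (n * (m - 1))))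
    (hBpart : ∀ g : Fin m ⊕ Fin (n * (m - 1)), ∃! i : Fin n, g ∈ B i)
    (hBbal : ∀ i : Fin n, (B i).card = m)
    (hBfpo : ¬ ∃ x : Fin n → (Fin m ⊕ Fin (n * (m - 1))) → ℝ,
      (∀ i g, 0 ≤ x i g) ∧
      (∀ i : Fin n, ∑ g, x i g = (m : ℝ)) ∧
      (∀ g, ∑ i : Fin n, x i g = 1) ∧
      (∀ i : Fin n, ∑ g ∈ B i, extv n m (n * (m - 1)) v i g ≤
        ∑ g, extv n m (n * (m - 1)) v i g * x i g) ∧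
      (∃ i : Fin n, ∑ g ∈ B i, extv n m (n * (m - 1)) v i g <
        ∑ g, extv n m (n * (m - 1)) v i g * x i g)) :
    ¬ ∃ x : Fin n → Fin m → ℝ,
      (∀ i j, 0 ≤ x i j) ∧
      (∀ j : Fin m, ∑ i : Fin n, x i j = 1) ∧
      (∀ i : Fin n, ∑ j ∈ Finset.univ.filter (fun j : Fin m => Sum.inl j ∈ B i), v i j ≤
        ∑ j, v i j * x i j) ∧
      (∃ i : Fin n, ∑ j ∈ Finset.univ.filter (fun j : Fin m => Sum.inl j ∈ B i), v i j <
        ∑ j, v i j * x i j) := by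
  rintro ⟨x, hx0, hxcol, hxge, i0, hi0⟩
  apply hBfpo
  -- counting: the partition and balance force m = n
  have hone : ∀ g : Fin m ⊕ Fin (n * (m - 1)),
      ∑ i : Fin n, (if g ∈ B i then (1:ℕ) else 0) = 1 := by
    intro g
    obtain ⟨i, hi, huniq⟩ := hBpart g
    rw [Finset.sum_eq_single i]
    · simp [hi]
    · intro j _ hj
      simp only [ite_eq_right_iff]
      intro hgj
      exact absurd (huniq j hgj) hj
    · simp
  have hcard : n * m = m + n * (m - 1) := by
    have h1 : ∑ i : Fin n, (B i).card
        = ∑ i : Fin n, ∑ g : Fin m ⊕ Fin (n * (m - 1)), (if g ∈ B i then 1 else 0) := by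
      refine Finset.sum_congr rfl fun i _ => ?_
      rw [Finset.sum_ite_mem, Finset.univ_inter, Finset.sum_const, smul_eq_mul, mul_one]
    rw [Finset.sum_comm] at h1
    simp only [hone, Finset.sum_const, Finset.card_univ, smul_eq_mul, mul_one,
      Fintype.card_sum, Fintype.card_fin] at h1
    have h2 : ∑ i : Fin n, (B i).card = n * m := by
      simp [hBbal, Finset.sum_const, Finset.card_univ]
    rw [h2] at h1
    exact h1
  have hmn : m = n := by
    have h3 : n * (m - 1) = n * m - n := by rw [Nat.mul_sub, Nat.mul_one]
    have h4 : n ≤ n * m := Nat.le_mul_of_pos_right n hm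
    omega
  have hmn' : (m : ℝ) = (n : ℝ) := by exact_mod_cast congrArg (Nat.cast : ℕ → ℝ) hmn
  have hdr : ((n * (m - 1) : ℕ) : ℝ) = (n:ℝ) * (m:ℝ) - (m:ℝ) := by
    have h5 : ((n * (m - 1) : ℕ) : ℝ) = (n:ℝ) * ((m:ℝ) - 1) := by
      push_cast [Nat.cast_sub hm]
      ring
    rw [h5, hmn']; ring
  have hs_le : ∀ i, ∑ j, x i j ≤ (m:ℝ) := by
    intro i
    calc ∑ j, x i j ≤ ∑ j, ∑ i' : Fin n, x i' j :=
          Finset.sum_le_sum fun j _ =>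
            Finset.single_le_sum (fun i' _ => hx0 i' j) (Finset.mem_univ i)
      _ = m := by simp [hxcol]
  set t : Fin n → ℝ := fun i => (m:ℝ) - ∑ j, x i j with ht
  have ht0 : ∀ i, 0 ≤ t i := fun i => by
    simp only [ht, sub_nonneg]; exact hs_le i
  have htsum : ∑ i, t i = ((n * (m - 1) : ℕ) : ℝ) := by
    have h5 : ∑ i : Fin n, ∑ j, x i j = (m:ℝ) := by
      rw [Finset.sum_comm]; simp [hxcol]
    simp only [ht, Finset.sum_sub_distrib, h5, Finset.sum_const, Finset.card_univ,
      Fintype.card_fin, nsmul_eq_mul, hdr]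
  have htd : ∀ i, ((n * (m - 1) : ℕ) : ℝ) * (t i / ((n * (m - 1) : ℕ) : ℝ)) = t i := by
    intro i
    rcases eq_or_ne (n * (m - 1)) 0 with h | h
    · have h6 : t i = 0 := by
        have := (Finset.sum_eq_zero_iff_of_nonneg (fun i _ => ht0 i)).mp
          (by rw [htsum, h]; simp) i (Finset.mem_univ i)
        exact this
      simp [h, h6]
    · have hne : ((n * (m - 1) : ℕ) : ℝ) ≠ 0 := Nat.cast_ne_zero.mpr h
      rw [← mul_div_assoc]
      exact mul_div_cancel_left₀ _ hne
  set y : Fin n → (Fin m ⊕ Fin (n * (m - 1))) → ℝ :=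
    fun i => Sum.elim (x i) (fun _ => t i / ((n * (m - 1) : ℕ) : ℝ)) with hy
  have hL : ∀ i, ∑ g ∈ B i, extv n m (n * (m - 1)) v i g
      = ∑ j ∈ Finset.univ.filter (fun j : Fin m => Sum.inl j ∈ B i), v i j := by
    intro i
    conv_lhs => rw [← Finset.filter_univ_mem (B i), Finset.sum_filter]
    rw [Fintype.sum_sum_type]
    simp [extv, Finset.sum_filter]
  have hR : ∀ i, ∑ g, extv n m (n * (m - 1)) v i g * y i g = ∑ j, v i j * x i j := by
    intro i
    rw [Fintype.sum_sum_type]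
    simp [extv, hy]
  refine ⟨y, ?_, ?_, ?_, ?_, i0, ?_⟩
  · intro i g
    cases g with
    | inl j => exact hx0 i j
    | inr k => exact div_nonneg (ht0 i) (Nat.cast_nonneg _)
  · intro i
    rw [Fintype.sum_sum_type]
    simp only [hy, Sum.elim_inl, Sum.elim_inr, Finset.sum_const, Finset.card_univ,
      Fintype.card_fin, nsmul_eq_mul]
    rw [htd i]
    simp [ht]
  · intro g
    cases g with
    | inl j => simpa [hy] using hxcol j
    | inr k =>
      have hne : ((n * (m - 1) : ℕ) : ℝ) ≠ 0 := Nat.cast_ne_zero.mpr k.pos.ne'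
      simp only [hy, Sum.elim_inr]
      rw [← Finset.sum_div, htsum]
      exact div_self hne
  · intro i
    rw [hL i, hR i]
    exact hxge i
  · rw [hL i0, hR i0]
    exact hi0
end

section
/- Suppose each agent i has a personalized bivalued valuation with values a_i > b_i ≥ 0. Then a balanced allocation A is fractionally Pareto optimal if and only if it maximizes ∑_{i∈N} v_i(A_i)/(a_i − b_i) over all balanced allocations. -/
open Finset

private lemma sum_split (n : ℕ) (f : Fin n → ℕ) (i0 i1 : Fin n) (h : i0 ≠ i1) :
    ∑ i, f i = f i0 + f i1 + ∑ i ∈ (univ.erase i0).erase i1, f i := by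
  rw [← Finset.add_sum_erase _ f (mem_univ i0),
    ← Finset.add_sum_erase _ f (mem_erase.2 ⟨Ne.symm h, mem_univ i1⟩)]
  ring

lemma exchange_lemma (n m k : ℕ) (Hs : Fin n → Finset (Fin m))
    (A : Fin n → Finset (Fin m)) (hA : IsBalanced n m k A)
    (B0 : Fin n → Finset (Fin m)) (hB0 : IsBalanced n m k B0)
    (hgt : ∑ i, (A i ∩ Hs i).card < ∑ i, (B0 i ∩ Hs i).card) :
    ∃ B, IsBalanced n m k B ∧ (∀ i, (A i ∩ Hs i).card ≤ (B i ∩ Hs i).card) ∧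
      ∑ i, (A i ∩ Hs i).card < ∑ i, (B i ∩ Hs i).card := by
  classical
  set C : Finset (Fin n → Finset (Fin m)) :=
    univ.filter (fun B => IsBalanced n m k B ∧
      ∑ i, (A i ∩ Hs i).card < ∑ i, (B i ∩ Hs i).card) with hC
  have hCne : C.Nonempty := ⟨B0, by simp [hC, hB0, hgt]⟩
  obtain ⟨B, hBC, hBmin⟩ := C.exists_min_image (fun B => ∑ i, (B i \ A i).card) hCne
  rw [hC, mem_filter] at hBC
  obtain ⟨-, hBbal, hBgt⟩ := hBC
  refine ⟨B, hBbal, ?_, hBgt⟩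
  by_contra hcon
  push_neg at hcon
  obtain ⟨i0, hi0⟩ := hcon
  -- find js ∈ (A i0 ∩ Hs i0) \ B i0
  have hjstar : ¬ (A i0 ∩ Hs i0 ⊆ B i0) := by
    intro hsub
    have : A i0 ∩ Hs i0 ⊆ B i0 ∩ Hs i0 := fun j hj =>
      mem_inter.2 ⟨hsub hj, (mem_inter.1 hj).2⟩
    exact absurd (card_le_card this) (by omega)
  obtain ⟨js, hjsA, hjsB⟩ := not_subset.1 hjstar
  have hjsA' : js ∈ A i0 := (mem_inter.1 hjsA).1
  have hjsH : js ∈ Hs i0 := (mem_inter.1 hjsA).2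
  -- find jl ∈ (B i0 \ Hs i0) \ A i0
  have hjlo : ¬ (B i0 \ Hs i0 ⊆ A i0) := by
    intro hsub
    have h1 : B i0 \ Hs i0 ⊆ A i0 \ Hs i0 := fun j hj =>
      mem_sdiff.2 ⟨hsub hj, (mem_sdiff.1 hj).2⟩
    have h2 := card_le_card h1
    have e1 := card_sdiff_add_card_inter (B i0) (Hs i0)
    have e2 := card_sdiff_add_card_inter (A i0) (Hs i0)
    rw [hBbal.2 i0] at e1
    rw [hA.2 i0] at e2
    omega
  obtain ⟨jl, hjlB, hjlA⟩ := not_subset.1 hjlo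
  have hjlB' : jl ∈ B i0 := (mem_sdiff.1 hjlB).1
  have hjlH : jl ∉ Hs i0 := (mem_sdiff.1 hjlB).2
  -- owner of js in B
  obtain ⟨i1, hi1mem, hi1uniq⟩ := hBbal.1 js
  have hne : i1 ≠ i0 := fun h => hjsB (h ▸ hi1mem)
  have hjlB1 : jl ∉ B i1 := fun h => hne ((hBbal.1 jl).unique h hjlB')
  have hjsjl : js ≠ jl := fun h => hjlH (h ▸ hjsH)
  have hjsA1 : js ∉ A i1 := fun h => hne ((hA.1 js).unique h hjsA')
  -- define B'
  set B' : Fin n → Finset (Fin m) := fun i =>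
    if i = i0 then insert js ((B i0).erase jl)
    else if i = i1 then insert jl ((B i1).erase js) else B i with hB'def
  have hB'0 : B' i0 = insert js ((B i0).erase jl) := by simp [hB'def]
  have hB'1 : B' i1 = insert jl ((B i1).erase js) := by simp [hB'def, hne]
  have hB'o : ∀ i, i ≠ i0 → i ≠ i1 → B' i = B i := by
    intro i h0 h1; simp [hB'def, h0, h1]
  -- balanced
  have hB'bal : IsBalanced n m k B' := by
    constructor
    · intro j
      by_cases h1 : j = js
      · rw [h1]
        refine ⟨i0, ?_, ?_⟩
        · show js ∈ B' i0
          rw [hB'0]; exact mem_insert_self _ _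
        · intro i hi
          have hi' : js ∈ B' i := hi
          by_contra hii0
          by_cases hii1 : i = i1
          · rw [hii1, hB'1, mem_insert, mem_erase] at hi'
            rcases hi' with h | h
            · exact hjsjl h
            · exact h.1 rfl
          · rw [hB'o i hii0 hii1] at hi'
            exact hii0 (hi1uniq i hi' ▸ (hii1 (hi1uniq i hi')).elim)
      · by_cases h2 : j = jl
        · rw [h2]
          refine ⟨i1, ?_, ?_⟩
          · show jl ∈ B' i1
            rw [hB'1]; exact mem_insert_self _ _
          · intro i hi
            have hi' : jl ∈ B' i := hi
            by_contra hii1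
            by_cases hii0 : i = i0
            · rw [hii0, hB'0, mem_insert, mem_erase] at hi'
              rcases hi' with h | h
              · exact hjsjl h.symm
              · exact h.1 rfl
            · rw [hB'o i hii0 hii1] at hi'
              exact hii0 ((hBbal.1 jl).unique hi' hjlB')
        · obtain ⟨i2, hi2, hu2⟩ := hBbal.1 j
          have key : ∀ i, j ∈ B' i ↔ j ∈ B i := by
            intro i
            by_cases hii0 : i = i0
            · rw [hii0, hB'0]; simp [h1, h2]
            · by_cases hii1 : i = i1
              · rw [hii1, hB'1]; simp [h1, h2]
              · rw [hB'o i hii0 hii1]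
          refine ⟨i2, ?_, ?_⟩
          · show j ∈ B' i2
            exact (key i2).2 hi2
          · intro i hi
            have hi' : j ∈ B' i := hi
            exact hu2 i ((key i).1 hi')
    · intro i
      have hk1 : 1 ≤ k := by
        have := card_pos.2 ⟨jl, hjlB'⟩; rw [hBbal.2 i0] at this; omega
      by_cases hii0 : i = i0
      · rw [hii0, hB'0, card_insert_of_notMem (by simp [hjsjl, hjsB]),
          card_erase_of_mem hjlB', hBbal.2 i0]
        omega
      · by_cases hii1 : i = i1
        · rw [hii1, hB'1, card_insert_of_notMem (by simp [Ne.symm hjsjl, hjlB1]),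
            card_erase_of_mem hi1mem, hBbal.2 i1]
          omega
        · rw [hB'o i hii0 hii1]; exact hBbal.2 i
  -- welfare doesn't drop
  have hw0 : (B' i0 ∩ Hs i0).card = (B i0 ∩ Hs i0).card + 1 := by
    have : B' i0 ∩ Hs i0 = insert js (B i0 ∩ Hs i0) := by
      rw [hB'0]
      ext j
      simp only [mem_inter, mem_insert, mem_erase]
      constructor
      · rintro ⟨h | ⟨hj1, hj2⟩, hH⟩
        · exact Or.inl h
        · exact Or.inr ⟨hj2, hH⟩
      · rintro (rfl | ⟨hjB, hjH⟩)
        · exact ⟨Or.inl rfl, hjsH⟩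
        · exact ⟨Or.inr ⟨fun h => hjlH (h ▸ hjH), hjB⟩, hjH⟩
    rw [this, card_insert_of_notMem (fun h => hjsB (mem_inter.1 h).1)]
  have hw1 : (B i1 ∩ Hs i1).card ≤ (B' i1 ∩ Hs i1).card + 1 := by
    have hsub : B i1 ∩ Hs i1 ⊆ insert js (B' i1 ∩ Hs i1) := by
      intro j hj
      obtain ⟨hjB, hjH⟩ := mem_inter.1 hj
      by_cases h : j = js
      · exact mem_insert.2 (Or.inl h)
      · refine mem_insert.2 (Or.inr (mem_inter.2 ⟨?_, hjH⟩))
        rw [hB'1]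
        exact mem_insert_of_mem (mem_erase.2 ⟨h, hjB⟩)
    calc (B i1 ∩ Hs i1).card ≤ (insert js (B' i1 ∩ Hs i1)).card := card_le_card hsub
      _ ≤ (B' i1 ∩ Hs i1).card + 1 := card_insert_le _ _
  have hwo : ∀ i, i ≠ i0 → i ≠ i1 → (B' i ∩ Hs i).card = (B i ∩ Hs i).card := by
    intro i h0 h1; rw [hB'o i h0 h1]
  have hwelf : ∑ i, (B i ∩ Hs i).card ≤ ∑ i, (B' i ∩ Hs i).card := by
    rw [sum_split n _ i0 i1 (Ne.symm hne), sum_split n (fun i => (B' i ∩ Hs i).card) i0 i1 (Ne.symm hne)]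
    have htail : ∑ i ∈ (univ.erase i0).erase i1, (B' i ∩ Hs i).card
        = ∑ i ∈ (univ.erase i0).erase i1, (B i ∩ Hs i).card := by
      refine Finset.sum_congr rfl fun i hi => ?_
      rw [mem_erase, mem_erase] at hi
      exact hwo i hi.2.1 hi.1
    omega
  -- distance drops
  have hd0 : (B' i0 \ A i0).card + 1 ≤ (B i0 \ A i0).card := by
    have hsub : B' i0 \ A i0 ⊆ (B i0 \ A i0).erase jl := by
      intro j hj
      obtain ⟨hj1, hj2⟩ := mem_sdiff.1 hj
      rw [hB'0, mem_insert, mem_erase] at hj1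
      rcases hj1 with rfl | ⟨hjne, hjB⟩
      · exact absurd hjsA' hj2
      · exact mem_erase.2 ⟨hjne, mem_sdiff.2 ⟨hjB, hj2⟩⟩
    have hjlmem : jl ∈ B i0 \ A i0 := mem_sdiff.2 ⟨hjlB', hjlA⟩
    have := card_le_card hsub
    rw [card_erase_of_mem hjlmem] at this
    have hpos := card_pos.2 ⟨jl, hjlmem⟩
    omega
  have hd1 : (B' i1 \ A i1).card ≤ (B i1 \ A i1).card := by
    have hsub : B' i1 \ A i1 ⊆ insert jl ((B i1 \ A i1).erase js) := by
      intro j hj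
      obtain ⟨hj1, hj2⟩ := mem_sdiff.1 hj
      rw [hB'1, mem_insert, mem_erase] at hj1
      rcases hj1 with rfl | ⟨hjne, hjB⟩
      · exact mem_insert_self _ _
      · exact mem_insert_of_mem (mem_erase.2 ⟨hjne, mem_sdiff.2 ⟨hjB, hj2⟩⟩)
    have hjsmem : js ∈ B i1 \ A i1 := mem_sdiff.2 ⟨hi1mem, hjsA1⟩
    have h1 := card_le_card hsub
    have h2 := card_insert_le jl ((B i1 \ A i1).erase js)
    rw [card_erase_of_mem hjsmem] at h2
    have hpos := card_pos.2 ⟨js, hjsmem⟩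
    omega
  have hdo : ∀ i, i ≠ i0 → i ≠ i1 → (B' i \ A i).card = (B i \ A i).card := by
    intro i h0 h1; rw [hB'o i h0 h1]
  have hdist : ∑ i, (B' i \ A i).card < ∑ i, (B i \ A i).card := by
    rw [sum_split n _ i0 i1 (Ne.symm hne), sum_split n (fun i => (B i \ A i).card) i0 i1 (Ne.symm hne)]
    have htail : ∑ i ∈ (univ.erase i0).erase i1, (B' i \ A i).card
        = ∑ i ∈ (univ.erase i0).erase i1, (B i \ A i).card := by
      refine Finset.sum_congr rfl fun i hi => ?_
      rw [mem_erase, mem_erase] at hi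
      exact hdo i hi.2.1 hi.1
    omega
  have hB'C : B' ∈ C := by
    rw [hC, mem_filter]
    exact ⟨mem_univ _, hB'bal, lt_of_lt_of_le hBgt hwelf⟩
  exact absurd (hBmin B' hB'C) (by omega)

lemma integrality_lemma (n m k : ℕ) (hm : m = n * k) (Hs : Fin n → Finset (Fin m))
    (x : Fin n → Fin m → ℝ) (hx : IsFracBalanced n m k x) :
    ∃ B, IsBalanced n m k B ∧
      ∑ i, ∑ j ∈ Hs i, x i j ≤ (∑ i, (B i ∩ Hs i).card : ℝ) := by
  classical
  obtain ⟨hx0, hxr, hxc⟩ := hx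
  rcases Nat.eq_zero_or_pos k with rfl | hk
  · have hm0 : m = 0 := by omega
    refine ⟨fun _ => ∅, ⟨fun j => absurd j.2 (by omega), fun i => rfl⟩, ?_⟩
    have hx00 : ∀ i j, x i j = 0 := fun i j => absurd j.2 (by omega)
    simp [hx00]
  · have hkR : (k : ℝ) ≠ 0 := Nat.cast_ne_zero.2 (by omega)
    have hkR' : (0:ℝ) < k := by positivity
    set e : Fin n × Fin k ≃ Fin m := finProdFinEquiv.trans (finCongr hm.symm) with he
    set r : Fin m → Fin n := fun p => (e.symm p).1 with hr
    have hre : ∀ q : Fin n × Fin k, r (e q) = q.1 := by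
      intro q; rw [hr]; simp only [Equiv.symm_apply_apply]
    set M : Matrix (Fin m) (Fin m) ℝ := fun p j => x (r p) j / k with hM
    have hreindex : ∀ (F : Fin n → ℝ), ∑ p : Fin m, F (r p) = ∑ i : Fin n, (k : ℝ) * F i := by
      intro F
      rw [← Equiv.sum_comp e (fun p => F (r p))]
      rw [Fintype.sum_congr _ _ (fun q => by rw [hre q])]
      rw [Fintype.sum_prod_type]
      simp [mul_comm]
    have hMds : M ∈ doublyStochastic ℝ (Fin m) := by
      rw [mem_doublyStochastic_iff_sum]
      refine ⟨fun p j => div_nonneg (hx0 _ _) (by positivity), ?_, ?_⟩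
      · intro p
        rw [hM]
        simp only
        rw [← Finset.sum_div, hxr (r p), div_self hkR]
      · intro j
        have h1 : ∑ p : Fin m, M p j = ∑ i : Fin n, (k:ℝ) * (x i j / k) :=
          hreindex (fun i => x i j / k)
        rw [h1]
        rw [Fintype.sum_congr _ _ (fun i => by field_simp : ∀ i, (k:ℝ) * (x i j / k) = x i j)]
        exact hxc j
    obtain ⟨w, hw0, hw1, hwM⟩ := exists_eq_sum_perm_of_mem_doublyStochastic hMds
    set f : Matrix (Fin m) (Fin m) ℝ → ℝ :=
      fun N => ∑ p : Fin m, ∑ j : Fin m, (if j ∈ Hs (r p) then (1:ℝ) else 0) * N p j with hf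
    have hinner : ∀ (N : Matrix (Fin m) (Fin m) ℝ) (p : Fin m),
        ∑ j : Fin m, (if j ∈ Hs (r p) then (1:ℝ) else 0) * N p j = ∑ j ∈ Hs (r p), N p j := by
      intro N p
      simp only [ite_mul, one_mul, zero_mul, Finset.sum_ite_mem, univ_inter]
    -- f M = LHS
    have hfM : f M = ∑ i, ∑ j ∈ Hs i, x i j := by
      rw [hf]
      simp only
      rw [Fintype.sum_congr _ _ (hinner M)]
      have : ∀ p : Fin m, ∑ j ∈ Hs (r p), M p j = (∑ j ∈ Hs (r p), x (r p) j) / k := by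
        intro p; rw [Finset.sum_div]
      rw [Fintype.sum_congr _ _ this]
      rw [hreindex (fun i => (∑ j ∈ Hs i, x i j) / k)]
      refine Finset.sum_congr rfl fun i _ => ?_
      field_simp
    -- f is linear-ish : f of convex combo
    have hfsum : f (∑ σ : Equiv.Perm (Fin m), w σ • Equiv.Perm.permMatrix ℝ σ)
        = ∑ σ : Equiv.Perm (Fin m), w σ * f (Equiv.Perm.permMatrix ℝ σ) := by
      have hentry : ∀ p j, (∑ σ : Equiv.Perm (Fin m), w σ • Equiv.Perm.permMatrix ℝ σ) p j
          = ∑ σ : Equiv.Perm (Fin m), w σ * Equiv.Perm.permMatrix ℝ σ p j := by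
        intro p j
        simp [Matrix.sum_apply]
      calc f (∑ σ : Equiv.Perm (Fin m), w σ • Equiv.Perm.permMatrix ℝ σ)
          = ∑ p : Fin m, ∑ j : Fin m, ∑ σ : Equiv.Perm (Fin m),
              w σ * ((if j ∈ Hs (r p) then (1:ℝ) else 0) * Equiv.Perm.permMatrix ℝ σ p j) := by
            rw [hf]
            refine Finset.sum_congr rfl fun p _ => Finset.sum_congr rfl fun j _ => ?_
            rw [hentry p j, Finset.mul_sum]
            refine Finset.sum_congr rfl fun σ' _ => ?_
            ring
        _ = ∑ p : Fin m, ∑ σ : Equiv.Perm (Fin m), ∑ j : Fin m,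
              w σ * ((if j ∈ Hs (r p) then (1:ℝ) else 0) * Equiv.Perm.permMatrix ℝ σ p j) :=
            Finset.sum_congr rfl fun p _ => Finset.sum_comm
        _ = ∑ σ : Equiv.Perm (Fin m), ∑ p : Fin m, ∑ j : Fin m,
              w σ * ((if j ∈ Hs (r p) then (1:ℝ) else 0) * Equiv.Perm.permMatrix ℝ σ p j) :=
            Finset.sum_comm
        _ = ∑ σ : Equiv.Perm (Fin m), w σ * f (Equiv.Perm.permMatrix ℝ σ) := by
            rw [hf]
            refine Finset.sum_congr rfl fun σ' _ => ?_
            rw [Finset.mul_sum]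
            exact Finset.sum_congr rfl fun p _ => by rw [Finset.mul_sum]
    -- max over permutations
    obtain ⟨σ, -, hσmax⟩ := Finset.exists_max_image (univ : Finset (Equiv.Perm (Fin m)))
      (fun σ => f (Equiv.Perm.permMatrix ℝ σ)) ⟨1, mem_univ 1⟩
    have hboundf : f M ≤ f (Equiv.Perm.permMatrix ℝ σ) := by
      rw [← hwM, hfsum]
      calc ∑ σ' : Equiv.Perm (Fin m), w σ' * f (Equiv.Perm.permMatrix ℝ σ')
          ≤ ∑ σ' : Equiv.Perm (Fin m), w σ' * f (Equiv.Perm.permMatrix ℝ σ) := by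
            refine Finset.sum_le_sum fun σ' _ => ?_
            exact mul_le_mul_of_nonneg_left (hσmax σ' (mem_univ σ')) (hw0 σ')
        _ = f (Equiv.Perm.permMatrix ℝ σ) := by rw [← Finset.sum_mul, hw1, one_mul]
    -- value of f at a permutation matrix
    have hfperm : f (Equiv.Perm.permMatrix ℝ σ) =
        ∑ p : Fin m, (if σ p ∈ Hs (r p) then (1:ℝ) else 0) := by
      rw [hf]
      simp only
      rw [Fintype.sum_congr _ _ (hinner _)]
      refine Finset.sum_congr rfl fun p _ => ?_
      have : ∀ j, Equiv.Perm.permMatrix ℝ σ p j = if σ p = j then (1:ℝ) else 0 := by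
        intro j
        simp [Equiv.Perm.permMatrix, PEquiv.toMatrix_apply, Equiv.toPEquiv_apply]
      rw [Finset.sum_congr rfl (fun j _ => this j)]
      exact Finset.sum_ite_eq (Hs (r p)) (σ p) (fun _ => (1:ℝ))
    -- build the integral allocation from σ
    set B : Fin n → Finset (Fin m) := fun i => (univ.filter fun p => r p = i).image σ with hB
    have hmemB : ∀ (j : Fin m) (i : Fin n), j ∈ B i ↔ r (σ.symm j) = i := by
      intro j i
      rw [hB]
      simp only [mem_image, mem_filter, mem_univ, true_and]
      constructor
      · rintro ⟨p, hp, rfl⟩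
        rwa [Equiv.symm_apply_apply]
      · intro h
        exact ⟨σ.symm j, h, Equiv.apply_symm_apply σ j⟩
    have hfiber : ∀ i : Fin n, (univ.filter fun p => r p = i)
        = (({i} : Finset (Fin n)) ×ˢ (univ : Finset (Fin k))).image e := by
      intro i
      ext p
      simp only [mem_filter, mem_univ, true_and, mem_image, Finset.mem_product,
        Finset.mem_singleton]
      constructor
      · intro hp
        exact ⟨e.symm p, ⟨hp, trivial⟩, Equiv.apply_symm_apply e p⟩
      · rintro ⟨q, ⟨hq1, -⟩, rfl⟩
        rw [hre q, hq1]
    have hBbal : IsBalanced n m k B := by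
      constructor
      · intro j
        refine ⟨r (σ.symm j), (hmemB j _).2 rfl, fun i hi => ?_⟩
        have : j ∈ B i := hi
        exact ((hmemB j i).1 this).symm
      · intro i
        rw [hB]
        simp only
        rw [Finset.card_image_of_injective _ σ.injective, hfiber i,
          Finset.card_image_of_injective _ e.injective, Finset.card_product,
          Finset.card_singleton, Finset.card_univ, Fintype.card_fin, one_mul]
    refine ⟨B, hBbal, ?_⟩
    -- count equality
    have hcount : (∑ i, ((B i ∩ Hs i).card : ℝ))
        = ∑ p : Fin m, (if σ p ∈ Hs (r p) then (1:ℝ) else 0) := by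
      have hBi : ∀ i, B i ∩ Hs i
          = ((univ.filter fun p => r p = i).filter fun p => σ p ∈ Hs i).image σ := by
        intro i
        ext j
        simp only [mem_inter, hB, mem_image, mem_filter, mem_univ, true_and]
        constructor
        · rintro ⟨⟨p, hp, rfl⟩, hH⟩
          exact ⟨p, ⟨hp, hH⟩, rfl⟩
        · rintro ⟨p, ⟨hp, hH⟩, rfl⟩
          exact ⟨⟨p, hp, rfl⟩, hH⟩
      calc (∑ i, ((B i ∩ Hs i).card : ℝ))
          = ∑ i, ∑ p ∈ univ.filter fun p => r p = i, (if σ p ∈ Hs i then (1:ℝ) else 0) := by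
            refine Finset.sum_congr rfl fun i _ => ?_
            rw [hBi i, Finset.card_image_of_injective _ σ.injective, Finset.sum_boole]
        _ = ∑ i, ∑ p ∈ univ.filter fun p => r p = i, (if σ p ∈ Hs (r p) then (1:ℝ) else 0) := by
            refine Finset.sum_congr rfl fun i _ => Finset.sum_congr rfl fun p hp => ?_
            rw [(mem_filter.1 hp).2]
        _ = ∑ p : Fin m, (if σ p ∈ Hs (r p) then (1:ℝ) else 0) :=
            Finset.sum_fiberwise univ r _
    rw [← hfM, hcount, ← hfperm]
    exact hboundf

/-- For personalized bivalued valuations, a balanced allocation is fPO iff it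
maximizes `∑_i v_i(A_i)/(a_i − b_i)` over all balanced allocations. -/
theorem stmt6 (n m k : ℕ) (hm : m = n * k)
    (a b : Fin n → ℝ) (hb : ∀ i, 0 ≤ b i) (hab : ∀ i, b i < a i)
    (v : Fin n → Fin m → ℝ) (hbi : ∀ i j, v i j = a i ∨ v i j = b i)
    (A : Fin n → Finset (Fin m)) (hA : IsBalanced n m k A) :
    IsFPO n m k v A ↔
      ∀ B : Fin n → Finset (Fin m), IsBalanced n m k B →
        ∑ i : Fin n, (∑ j ∈ B i, v i j) / (a i - b i) ≤
          ∑ i : Fin n, (∑ j ∈ A i, v i j) / (a i - b i) := by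
  classical
  set Hs : Fin n → Finset (Fin m) := fun i => univ.filter (fun j => v i j = a i) with hHs
  have hd : ∀ i, 0 < a i - b i := fun i => by have := hab i; linarith
  have hva : ∀ i j, j ∈ Hs i → v i j = a i := by
    intro i j hj; rw [hHs] at hj; exact (mem_filter.1 hj).2
  have hvb : ∀ i j, j ∉ Hs i → v i j = b i := by
    intro i j hj
    rcases hbi i j with h | h
    · exact absurd (mem_filter.2 ⟨mem_univ j, h⟩) hj
    · exact h
  -- value of a bundle
  have sumval : ∀ (i : Fin n) (S : Finset (Fin m)),
      ∑ j ∈ S, v i j = (S.card : ℝ) * b i + ((S ∩ Hs i).card : ℝ) * (a i - b i) := by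
    intro i S
    have hSH : S.filter (fun j => v i j = a i) = S ∩ Hs i := by
      ext j; simp [hHs, mem_filter, mem_inter]
    rw [← Finset.sum_filter_add_sum_filter_not S (fun j => v i j = a i)]
    have h1 : ∑ j ∈ S.filter (fun j => v i j = a i), v i j
        = ((S ∩ Hs i).card : ℝ) * a i := by
      rw [Finset.sum_congr rfl (fun j hj => (mem_filter.1 hj).2), Finset.sum_const, hSH,
        nsmul_eq_mul]
    have h2 : ∑ j ∈ S.filter (fun j => ¬ v i j = a i), v i j
        = ((S.filter (fun j => ¬ v i j = a i)).card : ℝ) * b i := by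
      rw [Finset.sum_congr rfl (fun j hj => ?_), Finset.sum_const, nsmul_eq_mul]
      have := (mem_filter.1 hj).2
      rcases hbi i j with h | h
      · exact absurd h this
      · exact h
    rw [h1, h2]
    have hsplit := Finset.card_filter_add_card_filter_not
      (s := S) (p := fun j => v i j = a i)
    rw [hSH] at hsplit
    rw [← hsplit]
    push_cast
    ring
  -- value of a fractional bundle
  have fracval : ∀ (i : Fin n) (x : Fin n → Fin m → ℝ), (∑ j, x i j = (k:ℝ)) →
      ∑ j : Fin m, v i j * x i j
        = (k : ℝ) * b i + (∑ j ∈ Hs i, x i j) * (a i - b i) := by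
    intro i x hrow
    have hterm : ∀ j, v i j * x i j
        = b i * x i j + (if j ∈ Hs i then x i j else 0) * (a i - b i) := by
      intro j
      by_cases hj : j ∈ Hs i
      · rw [hva i j hj, if_pos hj]; ring
      · rw [hvb i j hj, if_neg hj]; ring
    rw [Fintype.sum_congr _ _ hterm, Finset.sum_add_distrib, ← Finset.mul_sum, hrow,
      ← Finset.sum_mul, Finset.sum_ite_mem, univ_inter]
    ring
  -- welfare identity for balanced allocations
  have key : ∀ (C : Fin n → Finset (Fin m)), IsBalanced n m k C →
      ∑ i : Fin n, (∑ j ∈ C i, v i j) / (a i - b i)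
        = (∑ i : Fin n, (k:ℝ) * b i / (a i - b i)) + ∑ i, ((C i ∩ Hs i).card : ℝ) := by
    intro C hC
    rw [← Finset.sum_add_distrib]
    refine Finset.sum_congr rfl fun i _ => ?_
    rw [sumval i (C i), hC.2 i]
    have hne := (hd i).ne'
    field_simp
  constructor
  · -- fPO → maximizer
    intro hfpo B hB
    rw [key B hB, key A hA, add_le_add_iff_left]
    by_contra hlt
    push_neg at hlt
    have hltN : ∑ i, (A i ∩ Hs i).card < ∑ i, (B i ∩ Hs i).card := by
      have := hlt
      rw [← Nat.cast_sum, ← Nat.cast_sum] at this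
      exact_mod_cast this
    obtain ⟨Bs, hBs, hdom, hsum⟩ := exchange_lemma n m k Hs A hA B hB hltN
    apply hfpo
    refine ⟨fun i j => if j ∈ Bs i then (1:ℝ) else 0, ?_, ?_, ?_⟩
    · refine ⟨fun i j => by positivity, fun i => ?_, fun j => ?_⟩
      · rw [Finset.sum_boole]
        rw [Finset.filter_mem_eq_inter, univ_inter, hBs.2 i]
      · rw [Finset.sum_boole]
        obtain ⟨i0, hi0, hu⟩ := hBs.1 j
        have : univ.filter (fun i => j ∈ Bs i) = {i0} := by
          ext i
          simp only [mem_filter, mem_univ, true_and, Finset.mem_singleton]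
          exact ⟨fun h => hu i h, fun h => h ▸ hi0⟩
        rw [this, Finset.card_singleton, Nat.cast_one]
    · intro i
      have hut : ∑ j : Fin m, v i j * (if j ∈ Bs i then (1:ℝ) else 0) = ∑ j ∈ Bs i, v i j := by
        simp only [mul_ite, mul_one, mul_zero, Finset.sum_ite_mem, univ_inter]
      rw [hut, sumval i (A i), sumval i (Bs i), hA.2 i, hBs.2 i]
      have : ((A i ∩ Hs i).card : ℝ) ≤ ((Bs i ∩ Hs i).card : ℝ) := by exact_mod_cast hdom i
      nlinarith [hd i]
    · have hex : ∃ i, (A i ∩ Hs i).card < (Bs i ∩ Hs i).card := by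
        by_contra hc
        push_neg at hc
        exact absurd (Finset.sum_le_sum (fun i (_ : i ∈ (univ : Finset (Fin n))) => hc i))
          (not_le.2 hsum)
      obtain ⟨i, hi⟩ := hex
      refine ⟨i, ?_⟩
      have hut : ∑ j : Fin m, v i j * (if j ∈ Bs i then (1:ℝ) else 0) = ∑ j ∈ Bs i, v i j := by
        simp only [mul_ite, mul_one, mul_zero, Finset.sum_ite_mem, univ_inter]
      rw [hut, sumval i (A i), sumval i (Bs i), hA.2 i, hBs.2 i]
      have : ((A i ∩ Hs i).card : ℝ) < ((Bs i ∩ Hs i).card : ℝ) := by exact_mod_cast hi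
      nlinarith [hd i]
  · -- maximizer → fPO
    intro hmax
    rintro ⟨x, hxfrac, hall, i0, hstrict⟩
    have hrow := hxfrac.2.1
    -- per-agent high-mass domination
    have hdomx : ∀ i, ((A i ∩ Hs i).card : ℝ) ≤ ∑ j ∈ Hs i, x i j := by
      intro i
      have := hall i
      rw [sumval i (A i), hA.2 i, fracval i x (hrow i)] at this
      have hdi := hd i
      nlinarith
    have hstrictx : ((A i0 ∩ Hs i0).card : ℝ) < ∑ j ∈ Hs i0, x i0 j := by
      rw [sumval i0 (A i0), hA.2 i0, fracval i0 x (hrow i0)] at hstrict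
      have hdi := hd i0
      nlinarith
    have hsumlt : (∑ i, ((A i ∩ Hs i).card :ℝ)) < ∑ i, ∑ j ∈ Hs i, x i j :=
      Finset.sum_lt_sum (fun i _ => hdomx i) ⟨i0, mem_univ i0, hstrictx⟩
    obtain ⟨B, hBbal, hBge⟩ := integrality_lemma n m k hm Hs x hxfrac
    have := hmax B hBbal
    rw [key B hBbal, key A hA, add_le_add_iff_left] at this
    have : (∑ i, ((B i ∩ Hs i).card : ℝ)) ≤ ∑ i, ((A i ∩ Hs i).card : ℝ) := this
    linarith
end

section
/- Let ε = 1/(nk(k+1)) and define matching weights w((i,s), j) = a_i/(a_i−b_i) + s·ε if v_{ij} = a_i, and b_i/(a_i−b_i) if v_{ij} = b_i, over slots (i,s) ∈ N × [k] and goods j ∈ M. If X* is a maximum-weight perfect matching between slots and goods, then the induced balanced allocation A* (where A*_i is the set of goods matched to slots of agent i) is EF1. -/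
open Finset

/-- The slot weight: slot `(i, s)` (with `s` counted from 1) and good `j`. -/
noncomputable def slotw (n m k : ℕ) (a b : Fin n → ℝ) (v : Fin n → Fin m → ℝ)
    (σ : Fin n × Fin k) (j : Fin m) : ℝ :=
  if v σ.1 j = a σ.1 then
    a σ.1 / (a σ.1 - b σ.1) + ((σ.2 : ℝ) + 1) * (1 / (n * k * (k + 1)))
  else b σ.1 / (a σ.1 - b σ.1)

lemma aux_max {k : ℕ} (F : Finset (Fin k)) (h : F.Nonempty) : ∃ x ∈ F, F.card ≤ (x : ℕ) + 1 := by
  refine ⟨F.max' h, F.max'_mem h, ?_⟩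
  calc F.card ≤ (Finset.Iic (F.max' h)).card :=
        Finset.card_le_card (fun y hy => Finset.mem_Iic.2 (F.le_max' y hy))
    _ = (F.max' h : ℕ) + 1 := Fin.card_Iic _

lemma aux_min {k : ℕ} (F : Finset (Fin k)) (h : F.Nonempty) : ∃ x ∈ F, (x : ℕ) + F.card ≤ k := by
  refine ⟨F.min' h, F.min'_mem h, ?_⟩
  have h1 : F.card ≤ (Finset.Ici (F.min' h)).card :=
    Finset.card_le_card (fun y hy => Finset.mem_Ici.2 (F.min'_le y hy))
  rw [Fin.card_Ici] at h1
  have h2 := (F.min' h).isLt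
  omega

/-- The balanced allocation induced by a maximum-weight perfect matching
between slots and goods (with the perturbed weights) is EF1. -/
theorem stmt8 (n m k : ℕ) (hm : m = n * k)
    (a b : Fin n → ℝ) (hb : ∀ i, 0 ≤ b i) (hab : ∀ i, b i < a i)
    (v : Fin n → Fin m → ℝ) (hbi : ∀ i j, v i j = a i ∨ v i j = b i)
    (μ : (Fin n × Fin k) ≃ Fin m)
    (hμ : ∀ μ' : (Fin n × Fin k) ≃ Fin m,
      ∑ σ : Fin n × Fin k, slotw n m k a b v σ (μ' σ) ≤
        ∑ σ : Fin n × Fin k, slotw n m k a b v σ (μ σ)) :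
    ∀ i i' : Fin n,
      ((Finset.univ : Finset (Fin k)).image (fun s => μ (i', s))) = ∅ ∨
      ∃ j ∈ (Finset.univ : Finset (Fin k)).image (fun s => μ (i', s)),
        ∑ j' ∈ (((Finset.univ : Finset (Fin k)).image (fun s => μ (i', s))).erase j), v i j' ≤
          ∑ j' ∈ (Finset.univ : Finset (Fin k)).image (fun s => μ (i, s)), v i j' := by
  classical
  intro i i'
  rcases Nat.eq_zero_or_pos k with hk | hk
  · left; subst hk; simp
  right
  have hn : 0 < n := i.pos
  have hnR : (0 : ℝ) < n := by exact_mod_cast hn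
  have hkR : (0 : ℝ) < k := by exact_mod_cast hk
  have hεpos : (0 : ℝ) < 1 / (n * k * (k + 1)) := by positivity
  have hinj : ∀ c : Fin n, ∀ x1 ∈ (Finset.univ : Finset (Fin k)), ∀ x2 ∈ Finset.univ,
      μ (c, x1) = μ (c, x2) → x1 = x2 := by
    intro c x1 _ x2 _ h
    have := μ.injective h
    exact (Prod.mk.injEq _ _ _ _ ▸ this).2
  -- counts of high-value goods
  set Hi : Finset (Fin k) := Finset.univ.filter (fun s => v i (μ (i, s)) = a i) with hHidef
  set Hi' : Finset (Fin k) := Finset.univ.filter (fun s => v i (μ (i', s)) = a i) with hHi'def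
  -- sum formula
  have key : ∀ c : Fin n, ∑ s : Fin k, v i (μ (c, s)) =
      (Finset.univ.filter (fun s : Fin k => v i (μ (c, s)) = a i)).card * a i +
      ((k - (Finset.univ.filter (fun s : Fin k => v i (μ (c, s)) = a i)).card : ℕ) : ℝ) * b i := by
    intro c
    rw [← Finset.sum_filter_add_sum_filter_not Finset.univ (fun s => v i (μ (c, s)) = a i)]
    have hcards := Finset.card_filter_add_card_filter_not
      (s := (Finset.univ : Finset (Fin k))) (p := fun s => v i (μ (c, s)) = a i)
    simp only [Finset.card_univ, Fintype.card_fin] at hcards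
    congr 1
    · rw [Finset.sum_congr rfl (fun s hs => (Finset.mem_filter.1 hs).2), Finset.sum_const,
        nsmul_eq_mul]
    · rw [Finset.sum_congr rfl (fun s hs => ?_), Finset.sum_const, nsmul_eq_mul]
      · congr 2
        omega
      · rcases hbi i (μ (c, s)) with h | h
        · exact absurd h (Finset.mem_filter.1 hs).2
        · exact h
  have hScard : Hi.card ≤ k := le_trans (Finset.card_le_card (Finset.filter_subset _ _)) (by simp)
  have hTcard : Hi'.card ≤ k := le_trans (Finset.card_le_card (Finset.filter_subset _ _)) (by simp)
  -- main claim
  have claim : Hi'.card ≤ Hi.card + 1 := by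
    by_contra hcon
    push_neg at hcon
    have h2 : Hi.card + 2 ≤ Hi'.card := hcon
    have hne : i ≠ i' := by
      rintro rfl
      rw [hHidef] at h2
      rw [hHi'def] at h2
      omega
    -- low slots of i
    set Li : Finset (Fin k) := Finset.univ.filter (fun s => ¬ v i (μ (i, s)) = a i) with hLidef
    have hLicard : Hi.card + Li.card = k := by
      have := Finset.card_filter_add_card_filter_not
        (s := (Finset.univ : Finset (Fin k))) (p := fun s => v i (μ (i, s)) = a i)
      simpa using this
    have hLine : Li.Nonempty := by
      rw [← Finset.card_pos]; omega
    obtain ⟨p, hpmem, hpcard⟩ := aux_max Li hLine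
    obtain ⟨q, hqmem, hqcard⟩ := aux_min Hi' (by rw [← Finset.card_pos]; omega)
    have hqp : (q : ℕ) < (p : ℕ) := by omega
    set x : Fin n × Fin k := (i, p) with hxdef
    set y : Fin n × Fin k := (i', q) with hydef
    have hxy : x ≠ y := by
      intro h
      exact hne (congrArg Prod.fst h)
    have hμ' := hμ ((Equiv.swap x y).trans μ)
    simp only [Equiv.trans_apply] at hμ'
    have reindex : ∑ σ : Fin n × Fin k, slotw n m k a b v σ (μ ((Equiv.swap x y) σ)) =
        ∑ σ : Fin n × Fin k, slotw n m k a b v ((Equiv.swap x y) σ) (μ σ) := by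
      rw [← Equiv.sum_comp (Equiv.swap x y)
        (fun σ => slotw n m k a b v ((Equiv.swap x y) σ) (μ σ))]
      simp [Equiv.swap_apply_self]
    rw [reindex] at hμ'
    have hpair : ({x, y} : Finset (Fin n × Fin k)) ⊆ Finset.univ := Finset.subset_univ _
    rw [← Finset.sum_sdiff hpair (f := fun σ => slotw n m k a b v ((Equiv.swap x y) σ) (μ σ)),
        ← Finset.sum_sdiff hpair (f := fun σ => slotw n m k a b v σ (μ σ))] at hμ'
    have hsame : ∑ σ ∈ Finset.univ \ {x, y}, slotw n m k a b v ((Equiv.swap x y) σ) (μ σ) =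
        ∑ σ ∈ Finset.univ \ {x, y}, slotw n m k a b v σ (μ σ) := by
      refine Finset.sum_congr rfl (fun σ hσ => ?_)
      simp only [Finset.mem_sdiff, Finset.mem_insert, Finset.mem_singleton] at hσ
      rw [Equiv.swap_apply_of_ne_of_ne (fun h => hσ.2 (Or.inl h)) (fun h => hσ.2 (Or.inr h))]
    rw [hsame] at hμ'
    have hpairsum : ∑ σ ∈ ({x, y} : Finset (Fin n × Fin k)),
        slotw n m k a b v ((Equiv.swap x y) σ) (μ σ) ≤
        ∑ σ ∈ ({x, y} : Finset (Fin n × Fin k)), slotw n m k a b v σ (μ σ) := by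
      linarith
    rw [Finset.sum_pair hxy, Finset.sum_pair hxy, Equiv.swap_apply_left,
      Equiv.swap_apply_right] at hpairsum
    -- hpairsum : slotw y (μ x) + slotw x (μ y) ≤ slotw x (μ x) + slotw y (μ y)
    have hxlow : ¬ v i (μ (i, p)) = a i := (Finset.mem_filter.1 hpmem).2
    have hyhigh : v i (μ (i', q)) = a i := (Finset.mem_filter.1 hqmem).2
    have hd : a i - b i > 0 := sub_pos.2 (hab i)
    have hd' : a i' - b i' > 0 := sub_pos.2 (hab i')
    have hxx : slotw n m k a b v x (μ x) = b i / (a i - b i) := by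
      simp [slotw, hxdef, hxlow]
    have hxy2 : slotw n m k a b v x (μ y) =
        a i / (a i - b i) + ((p : ℝ) + 1) * (1 / (n * k * (k + 1))) := by
      simp [slotw, hxdef, hydef, hyhigh]
    have hba : b i' / (a i' - b i') ≤ a i' / (a i' - b i') :=
      div_le_div_of_nonneg_right (le_of_lt (hab i')) (le_of_lt hd')
    have hqε : (0 : ℝ) ≤ ((q : ℝ) + 1) * (1 / (n * k * (k + 1))) := by positivity
    have hyx2 : b i' / (a i' - b i') ≤ slotw n m k a b v y (μ x) := by
      unfold slotw
      simp only [hydef]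
      split
      · linarith
      · exact le_refl _
    have hyy2 : slotw n m k a b v y (μ y) ≤
        a i' / (a i' - b i') + ((q : ℝ) + 1) * (1 / (n * k * (k + 1))) := by
      unfold slotw
      simp only [hydef]
      split
      · linarith
      · linarith
    have h1 : a i / (a i - b i) - b i / (a i - b i) = 1 := by
      rw [div_sub_div_same, div_self (ne_of_gt hd)]
    have h1' : a i' / (a i' - b i') - b i' / (a i' - b i') = 1 := by
      rw [div_sub_div_same, div_self (ne_of_gt hd')]
    have hmul : ((q : ℝ) + 1) * (1 / (n * k * (k + 1))) <
        ((p : ℝ) + 1) * (1 / (n * k * (k + 1))) := by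
      apply mul_lt_mul_of_pos_right _ hεpos
      have : (q : ℝ) < (p : ℝ) := by exact_mod_cast hqp
      linarith
    rw [hxx, hxy2] at hpairsum
    linarith
  -- conclude EF1 from the claim
  have hA : ∑ j' ∈ (Finset.univ : Finset (Fin k)).image (fun s => μ (i', s)), v i j' =
      ∑ s : Fin k, v i (μ (i', s)) := Finset.sum_image (hinj i')
  have hB : ∑ j' ∈ (Finset.univ : Finset (Fin k)).image (fun s => μ (i, s)), v i j' =
      ∑ s : Fin k, v i (μ (i, s)) := Finset.sum_image (hinj i)
  have habR : b i ≤ a i := le_of_lt (hab i)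
  have hbR : 0 ≤ b i := hb i
  rcases Nat.eq_zero_or_pos Hi'.card with hT0 | hT0
  · -- no high-value goods among i''s bundle
    set s0 : Fin k := ⟨0, hk⟩ with hs0
    refine ⟨μ (i', s0), Finset.mem_image.2 ⟨s0, Finset.mem_univ _, rfl⟩, ?_⟩
    have hjlow : v i (μ (i', s0)) = b i := by
      rcases hbi i (μ (i', s0)) with h | h
      · exfalso
        have : s0 ∈ Hi' := Finset.mem_filter.2 ⟨Finset.mem_univ _, h⟩
        rw [Finset.card_eq_zero.1 hT0] at this
        exact absurd this (Finset.notMem_empty _)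
      · exact h
    rw [Finset.sum_erase_eq_sub (Finset.mem_image.2 ⟨s0, Finset.mem_univ _, rfl⟩), hA, hB,
      key i', key i, hjlow]
    rw [← hHidef, ← hHi'def, hT0]
    have hc1 : ((k - Hi.card : ℕ) : ℝ) = (k : ℝ) - Hi.card := by
      push_cast [Nat.cast_sub hScard]; ring
    have hc2 : ((Hi.card : ℝ)) ≤ (k : ℝ) := by exact_mod_cast hScard
    rw [hc1]
    simp only [Nat.sub_zero]
    push_cast
    nlinarith [mul_nonneg (sub_nonneg.2 hc2) hbR,
      mul_nonneg (Nat.cast_nonneg Hi.card : (0:ℝ) ≤ Hi.card) (sub_nonneg.2 habR)]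
  · -- remove a high-value good
    obtain ⟨σ0, hσ0⟩ := Finset.card_pos.1 hT0
    have hσ0high : v i (μ (i', σ0)) = a i := (Finset.mem_filter.1 hσ0).2
    refine ⟨μ (i', σ0), Finset.mem_image.2 ⟨σ0, Finset.mem_univ _, rfl⟩, ?_⟩
    rw [Finset.sum_erase_eq_sub (Finset.mem_image.2 ⟨σ0, Finset.mem_univ _, rfl⟩), hA, hB,
      key i', key i, hσ0high]
    rw [← hHidef, ← hHi'def]
    have hc1 : ((k - Hi.card : ℕ) : ℝ) = (k : ℝ) - Hi.card := by
      push_cast [Nat.cast_sub hScard]; ring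
    have hc2 : ((k - Hi'.card : ℕ) : ℝ) = (k : ℝ) - Hi'.card := by
      push_cast [Nat.cast_sub hTcard]; ring
    have hc3 : ((Hi'.card : ℝ)) ≤ (Hi.card : ℝ) + 1 := by exact_mod_cast claim
    rw [hc1, hc2]
    nlinarith [mul_nonneg (sub_nonneg.2 (by linarith : (Hi'.card : ℝ) - 1 ≤ (Hi.card : ℝ)))
      (sub_nonneg.2 habR)]
end

section
/- With the slot weights above, the balanced allocation A* induced by any maximum-weight perfect matching is fPO: for every balanced allocation A, ∑_i v_i(A*_i)/(a_i−b_i) ≥ ∑_i v_i(A_i)/(a_i−b_i). Consequently A* maximizes the weighted welfare with weights α_i = 1/(a_i−b_i), hence is fPO. -/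
/-!
For bivalued valuations, `v i j / (a i - b i) = b i / (a i - b i) + [v i j = a i]`, so the
weighted welfare of a fractional balanced allocation `x` is a constant plus the mass `x` puts
on top goods. Likewise the slot weight of a matching is a constant plus its number of top goods
plus bonuses totalling at most `1/2`; since counts are integers, a maximum-weight matching `μ`
maximizes the number of top goods among all matchings. The slot matrix `x i (μ τ) / k` is
doubly stochastic, hence by Birkhoff's theorem a convex combination of permutation matrices,
i.e. of matchings, so the top mass of `x` is at most that of `μ`. Thus `A*` maximizes the
weighted welfare even among fractional allocations, which yields both claims.
-/

open Finset

theorem sum_mul_le_of_mem_doublyStochastic {R α : Type*} [Field R] [LinearOrder R]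
    [IsStrictOrderedRing R] [Fintype α] [DecidableEq α] {c y : Matrix α α R} {M : R}
    (hc : ∀ π : Equiv.Perm α, ∑ i, c i (π i) ≤ M)
    (hy : y ∈ doublyStochastic R α) : ∑ i, ∑ j, c i j * y i j ≤ M := by
  have hlin : IsLinearMap R fun y : Matrix α α R => ∑ i, ∑ j, c i j * y i j :=
    ⟨fun y z => by simp only [Matrix.add_apply, mul_add, sum_add_distrib],
      fun r y => by simp only [Matrix.smul_apply, smul_eq_mul, mul_sum, mul_left_comm]⟩
  rw [← SetLike.mem_coe, doublyStochastic_eq_convexHull_permMatrix] at hy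
  refine convexHull_min ?_ (convex_halfSpace_le hlin M) hy
  rintro _ ⟨π, rfl⟩
  simpa [Equiv.Perm.permMatrix, PEquiv.toMatrix_apply, eq_comm] using hc π

theorem sum_fin_val_add_one (k : ℕ) : ∑ s : Fin k, ((s : ℝ) + 1) = k * (k + 1) / 2 := by
  rw [Fin.sum_univ_eq_sum_range (fun i => (i : ℝ) + 1)]
  induction k with
  | zero => simp
  | succ k ih => rw [sum_range_succ, ih]; push_cast; ring

section SlotMatching

variable {n m k : ℕ}

theorem sum_prod_fst_div (hk : k ≠ 0) (f : Fin n → ℝ) :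
    ∑ σ : Fin n × Fin k, f σ.1 / k = ∑ i, f i := by
  simp [Fintype.sum_prod_type, mul_div_cancel₀, hk]

noncomputable def topIndicator (a : Fin n → ℝ) (v : Fin n → Fin m → ℝ) (i : Fin n) (j : Fin m) :
    ℝ :=
  if v i j = a i then 1 else 0

noncomputable def topCount (a : Fin n → ℝ) (v : Fin n → Fin m → ℝ) (e : Fin n × Fin k ≃ Fin m) :
    ℕ :=
  #{σ | v σ.1 (e σ) = a σ.1}

theorem topCount_eq_sum (a : Fin n → ℝ) (v : Fin n → Fin m → ℝ) (e : Fin n × Fin k ≃ Fin m) :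
    (topCount a v e : ℝ) = ∑ σ, topIndicator a v σ.1 (e σ) := by
  simp [topCount, topIndicator]

noncomputable def slotBonus (n k : ℕ) (σ : Fin n × Fin k) : ℝ :=
  ((σ.2 : ℝ) + 1) * (1 / (n * k * (k + 1)))

theorem slotBonus_nonneg (σ : Fin n × Fin k) : 0 ≤ slotBonus n k σ := by
  unfold slotBonus; positivity

theorem sum_slotBonus_le_half : ∑ σ : Fin n × Fin k, slotBonus n k σ ≤ 1 / 2 := by
  have hsum : ∑ σ : Fin n × Fin k, slotBonus n k σ
      = (n * k * (k + 1)) / (n * k * (k + 1)) / 2 := by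
    simp only [slotBonus, Fintype.sum_prod_type, ← sum_mul, sum_fin_val_add_one, sum_const,
      card_univ, Fintype.card_fin, nsmul_eq_mul]
    ring
  rw [hsum]
  gcongr
  exact div_self_le_one _

theorem slotw_eq {a b : Fin n → ℝ} (hab : ∀ i, b i < a i) (v : Fin n → Fin m → ℝ)
    (σ : Fin n × Fin k) (j : Fin m) :
    slotw n m k a b v σ j
      = b σ.1 / (a σ.1 - b σ.1) + topIndicator a v σ.1 j * (1 + slotBonus n k σ) := by
  have hd : a σ.1 - b σ.1 ≠ 0 := sub_ne_zero.2 (hab σ.1).ne'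
  unfold slotw topIndicator slotBonus
  split_ifs
  · field_simp; ring
  · ring

theorem add_topCount_le_sum_slotw {a b : Fin n → ℝ} (hab : ∀ i, b i < a i)
    (v : Fin n → Fin m → ℝ) (e : Fin n × Fin k ≃ Fin m) :
    ∑ σ : Fin n × Fin k, b σ.1 / (a σ.1 - b σ.1) + topCount a v e
      ≤ ∑ σ, slotw n m k a b v σ (e σ) := by
  rw [topCount_eq_sum, ← sum_add_distrib]
  refine sum_le_sum fun σ _ => ?_
  rw [slotw_eq hab]
  have := slotBonus_nonneg σ
  unfold topIndicator
  split_ifs <;> linarith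

theorem sum_slotw_le_add_topCount {a b : Fin n → ℝ} (hab : ∀ i, b i < a i)
    (v : Fin n → Fin m → ℝ) (e : Fin n × Fin k ≃ Fin m) :
    ∑ σ, slotw n m k a b v σ (e σ)
      ≤ ∑ σ : Fin n × Fin k, b σ.1 / (a σ.1 - b σ.1) + topCount a v e + 1 / 2 := by
  refine le_trans ?_ (add_le_add le_rfl (sum_slotBonus_le_half (n := n) (k := k)))
  rw [topCount_eq_sum, ← sum_add_distrib, ← sum_add_distrib]
  refine sum_le_sum fun σ _ => ?_
  rw [slotw_eq hab]
  have := slotBonus_nonneg σ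
  unfold topIndicator
  split_ifs <;> linarith

theorem topCount_le_of_sum_slotw_le {a b : Fin n → ℝ} (hab : ∀ i, b i < a i)
    {v : Fin n → Fin m → ℝ} {e μ : Fin n × Fin k ≃ Fin m}
    (h : ∑ σ, slotw n m k a b v σ (e σ) ≤ ∑ σ, slotw n m k a b v σ (μ σ)) :
    topCount a v e ≤ topCount a v μ := by
  have hlt : (topCount a v e : ℝ) < topCount a v μ + 1 := by
    linarith [add_topCount_le_sum_slotw hab v e, sum_slotw_le_add_topCount hab v μ]
  exact Nat.lt_succ_iff.1 (by exact_mod_cast hlt)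

noncomputable def allocIndicator (A : Fin n → Finset (Fin m)) (i : Fin n) (j : Fin m) : ℝ :=
  if j ∈ A i then 1 else 0

theorem sum_mul_allocIndicator (A : Fin n → Finset (Fin m)) (f : Fin m → ℝ) (i : Fin n) :
    ∑ j, f j * allocIndicator A i j = ∑ j ∈ A i, f j := by
  simp [allocIndicator]

theorem IsBalanced.isFracBalanced {A : Fin n → Finset (Fin m)} (hA : IsBalanced n m k A) :
    IsFracBalanced n m k (allocIndicator A) := by
  refine ⟨fun i j => by unfold allocIndicator; split_ifs <;> norm_num, fun i => ?_, fun j => ?_⟩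
  · simpa [allocIndicator] using congrArg (Nat.cast (R := ℝ)) (hA.2 i)
  · obtain ⟨i₀, hi₀, huniq⟩ := hA.1 j
    rw [sum_eq_single_of_mem i₀ (mem_univ _) fun i _ hi => ?_]
    · exact if_pos hi₀
    · exact if_neg fun hj => hi (huniq i hj)

def slotAlloc (e : Fin n × Fin k ≃ Fin m) (i : Fin n) : Finset (Fin m) :=
  univ.image fun s => e (i, s)

theorem mem_slotAlloc {e : Fin n × Fin k ≃ Fin m} {i : Fin n} {j : Fin m} :
    j ∈ slotAlloc e i ↔ (e.symm j).1 = i := by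
  simp only [slotAlloc, mem_image, mem_univ, true_and, ← Equiv.eq_symm_apply]
  exact ⟨fun ⟨s, hs⟩ => by rw [← hs], fun h => ⟨(e.symm j).2, by rw [← h]⟩⟩

theorem isBalanced_slotAlloc (e : Fin n × Fin k ≃ Fin m) : IsBalanced n m k (slotAlloc e) := by
  refine ⟨fun j => ⟨(e.symm j).1, mem_slotAlloc.2 rfl, fun i hi => (mem_slotAlloc.1 hi).symm⟩,
    fun i => ?_⟩
  rw [slotAlloc, card_image_of_injective _ fun s t hst => (Prod.mk.inj (e.injective hst)).2]
  simp

noncomputable def weightedWelfare (a b : Fin n → ℝ) (v x : Fin n → Fin m → ℝ) : ℝ :=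
  ∑ i, (∑ j, v i j * x i j) / (a i - b i)

noncomputable def topMass (a : Fin n → ℝ) (v x : Fin n → Fin m → ℝ) : ℝ :=
  ∑ i, ∑ j, topIndicator a v i j * x i j

theorem div_sub_eq_add_topIndicator {a b : Fin n → ℝ} (hab : ∀ i, b i < a i)
    {v : Fin n → Fin m → ℝ} (hbi : ∀ i j, v i j = a i ∨ v i j = b i) (i : Fin n) (j : Fin m) :
    v i j / (a i - b i) = b i / (a i - b i) + topIndicator a v i j := by
  have hd : a i - b i ≠ 0 := sub_ne_zero.2 (hab i).ne'
  rcases hbi i j with h | h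
  · rw [topIndicator, if_pos h, h]
    field_simp
    ring
  · rw [topIndicator, if_neg (h ▸ (hab i).ne), h, add_zero]

theorem weightedWelfare_eq {a b : Fin n → ℝ} (hab : ∀ i, b i < a i)
    {v x : Fin n → Fin m → ℝ} (hbi : ∀ i j, v i j = a i ∨ v i j = b i)
    (hrow : ∀ i, ∑ j, x i j = k) :
    weightedWelfare a b v x = ∑ i, k * (b i / (a i - b i)) + topMass a v x := by
  rw [weightedWelfare, topMass, ← sum_add_distrib]
  refine sum_congr rfl fun i _ => ?_
  calc (∑ j, v i j * x i j) / (a i - b i)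
      = ∑ j, (b i / (a i - b i) * x i j + topIndicator a v i j * x i j) := by
        rw [sum_div]
        refine sum_congr rfl fun j _ => ?_
        rw [mul_div_right_comm, div_sub_eq_add_topIndicator hab hbi, add_mul]
    _ = k * (b i / (a i - b i)) + ∑ j, topIndicator a v i j * x i j := by
        rw [sum_add_distrib, ← mul_sum, hrow, mul_comm]

theorem topMass_allocIndicator_slotAlloc (a : Fin n → ℝ) (v : Fin n → Fin m → ℝ)
    (e : Fin n × Fin k ≃ Fin m) : topMass a v (allocIndicator (slotAlloc e)) = topCount a v e := by
  rw [topMass, topCount_eq_sum, Fintype.sum_prod_type]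
  refine sum_congr rfl fun i _ => ?_
  rw [sum_mul_allocIndicator, slotAlloc,
    sum_image fun s _ t _ hst => (Prod.mk.inj (e.injective hst)).2]

theorem slotMatrix_mem_doublyStochastic {x : Fin n → Fin m → ℝ} (hx : IsFracBalanced n m k x)
    (μ : Fin n × Fin k ≃ Fin m) :
    Matrix.of (fun σ τ : Fin n × Fin k => x σ.1 (μ τ) / k)
      ∈ doublyStochastic ℝ (Fin n × Fin k) := by
  obtain ⟨hx0, hrow, hcol⟩ := hx
  refine mem_doublyStochastic_iff_sum.2
    ⟨fun σ τ => div_nonneg (hx0 _ _) k.cast_nonneg, fun σ => ?_, fun τ => ?_⟩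
  · have hk : (k : ℝ) ≠ 0 := Nat.cast_ne_zero.2 σ.2.pos.ne'
    rw [← div_self hk, ← hrow σ.1, ← Equiv.sum_comp μ, sum_div]
    rfl
  · simp only [Matrix.of_apply, sum_prod_fst_div τ.2.pos.ne' (fun i => x i (μ τ)), hcol]

theorem topMass_le_topCount {a : Fin n → ℝ} {v x : Fin n → Fin m → ℝ}
    (hx : IsFracBalanced n m k x) {μ : Fin n × Fin k ≃ Fin m}
    (hμ : ∀ e : Fin n × Fin k ≃ Fin m, topCount a v e ≤ topCount a v μ) :
    topMass a v x ≤ topCount a v μ := by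
  rcases eq_or_ne k 0 with rfl | hk
  · have : IsEmpty (Fin m) := μ.symm.isEmpty
    simp [topMass]
  have hmass : topMass a v x
      = ∑ σ : Fin n × Fin k, ∑ τ, topIndicator a v σ.1 (μ τ) * (x σ.1 (μ τ) / k) := by
    rw [topMass, ← sum_prod_fst_div hk]
    refine sum_congr rfl fun σ _ => ?_
    rw [← Equiv.sum_comp μ, sum_div]
    simp only [mul_div_assoc]
  rw [hmass]
  refine sum_mul_le_of_mem_doublyStochastic (fun π => ?_) (slotMatrix_mem_doublyStochastic hx μ)
  have hπ := (Nat.cast_le (α := ℝ)).2 (hμ (π.trans μ))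
  simp only [topCount_eq_sum] at hπ ⊢
  exact hπ

theorem weightedWelfare_le_slotAlloc {a b : Fin n → ℝ} (hab : ∀ i, b i < a i)
    {v : Fin n → Fin m → ℝ} (hbi : ∀ i j, v i j = a i ∨ v i j = b i)
    {μ : Fin n × Fin k ≃ Fin m}
    (hμ : ∀ e : Fin n × Fin k ≃ Fin m,
      ∑ σ, slotw n m k a b v σ (e σ) ≤ ∑ σ, slotw n m k a b v σ (μ σ))
    {x : Fin n → Fin m → ℝ} (hx : IsFracBalanced n m k x) :
    weightedWelfare a b v x ≤ weightedWelfare a b v (allocIndicator (slotAlloc μ)) := by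
  rw [weightedWelfare_eq hab hbi hx.2.1,
    weightedWelfare_eq hab hbi (isBalanced_slotAlloc μ).isFracBalanced.2.1,
    topMass_allocIndicator_slotAlloc]
  gcongr
  exact topMass_le_topCount hx fun e => topCount_le_of_sum_slotw_le hab (hμ e)

end SlotMatching

theorem stmt9_general (n m k : ℕ)
    (a b : Fin n → ℝ) (hab : ∀ i, b i < a i)
    (v : Fin n → Fin m → ℝ) (hbi : ∀ i j, v i j = a i ∨ v i j = b i)
    (μ : (Fin n × Fin k) ≃ Fin m)
    (hμ : ∀ μ' : (Fin n × Fin k) ≃ Fin m,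
      ∑ σ : Fin n × Fin k, slotw n m k a b v σ (μ' σ) ≤
        ∑ σ : Fin n × Fin k, slotw n m k a b v σ (μ σ))
    (Astar : Fin n → Finset (Fin m))
    (hAstar : ∀ i : Fin n,
      Astar i = (Finset.univ : Finset (Fin k)).image (fun s => μ (i, s))) :
    (∀ B : Fin n → Finset (Fin m), IsBalanced n m k B →
      ∑ i : Fin n, (∑ j ∈ B i, v i j) / (a i - b i) ≤
        ∑ i : Fin n, (∑ j ∈ Astar i, v i j) / (a i - b i)) ∧
    IsFPO n m k v Astar := by
  obtain rfl : Astar = slotAlloc μ := funext hAstar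
  have hmax := fun x (hx : IsFracBalanced n m k x) => weightedWelfare_le_slotAlloc hab hbi hμ hx
  simp only [weightedWelfare, sum_mul_allocIndicator] at hmax
  refine ⟨fun B hB => by simpa only [sum_mul_allocIndicator] using hmax _ hB.isFracBalanced, ?_⟩
  rintro ⟨x, hx, hle, i₀, hlt⟩
  have hd : ∀ i, 0 < a i - b i := fun i => sub_pos.2 (hab i)
  exact (hmax x hx).not_gt <| sum_lt_sum (fun i _ => div_le_div_of_nonneg_right (hle i) (hd i).le)
    ⟨i₀, mem_univ _, div_lt_div_of_pos_right hlt (hd i₀)⟩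

/-- The allocation induced by a maximum-weight perfect matching maximizes the
welfare weighted by `1/(a_i − b_i)` over all balanced allocations, and hence
is fPO. -/
theorem stmt9 (n m k : ℕ) (hm : m = n * k)
    (a b : Fin n → ℝ) (hb : ∀ i, 0 ≤ b i) (hab : ∀ i, b i < a i)
    (v : Fin n → Fin m → ℝ) (hbi : ∀ i j, v i j = a i ∨ v i j = b i)
    (μ : (Fin n × Fin k) ≃ Fin m)
    (hμ : ∀ μ' : (Fin n × Fin k) ≃ Fin m,
      ∑ σ : Fin n × Fin k, slotw n m k a b v σ (μ' σ) ≤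
        ∑ σ : Fin n × Fin k, slotw n m k a b v σ (μ σ))
    (Astar : Fin n → Finset (Fin m))
    (hAstar : ∀ i : Fin n,
      Astar i = (Finset.univ : Finset (Fin k)).image (fun s => μ (i, s))) :
    (∀ B : Fin n → Finset (Fin m), IsBalanced n m k B →
      ∑ i : Fin n, (∑ j ∈ B i, v i j) / (a i - b i) ≤
        ∑ i : Fin n, (∑ j ∈ Astar i, v i j) / (a i - b i)) ∧
    IsFPO n m k v Astar :=
  stmt9_general n m k a b hab v hbi μ hμ Astar hAstar
end

section
/- If every agent has a personalized bivalued valuation and m is a multiple of n, then there exists a balanced allocation that is both EF1 and fractionally Pareto optimal. -/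
open Finset

namespace Stmt10Aux

noncomputable def clamp (c : ℝ) : ℝ := min (max c 0) 1

lemma clamp_mono : Monotone clamp := fun _ _ h =>
  min_le_min (max_le_max h le_rfl) le_rfl

lemma clamp_nonpos {c : ℝ} (h : c ≤ 0) : clamp c = 0 := by
  simp [clamp, max_eq_right h]

lemma clamp_of_one_le {c : ℝ} (h : 1 ≤ c) : clamp c = 1 := by
  have : max c 0 = c := max_eq_left (le_trans zero_le_one h)
  simp [clamp, this, min_eq_right h]

lemma clamp_of_mem {c : ℝ} (h0 : 0 ≤ c) (h1 : c ≤ 1) : clamp c = c := by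
  simp [clamp, max_eq_left h0, min_eq_left h1]

lemma gsum (K : ℕ) : ∀ c : ℝ, 0 ≤ c → c ≤ K →
    ∑ t ∈ Finset.range K, clamp (c - t) = c := by
  induction K with
  | zero => intro c h0 h1; simpa using (le_antisymm (by simpa using h1) h0).symm
  | succ K ih =>
    intro c h0 h1
    rw [Finset.sum_range_succ']
    rcases le_or_gt 1 c with hc | hc
    · have h2 : ∑ t ∈ Finset.range K, clamp (c - ((t:ℕ) + 1)) = c - 1 := by
        have := ih (c - 1) (by linarith) (by push_cast at h1 ⊢; linarith)
        rw [← this]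
        refine Finset.sum_congr rfl fun t _ => ?_
        ring_nf
      push_cast
      rw [h2]
      simp [clamp_of_one_le (by simpa using hc)]
    · have h2 : ∀ t ∈ Finset.range K, clamp (c - ((t:ℕ) + 1)) = 0 := by
        intro t _
        apply clamp_nonpos
        have : (0:ℝ) ≤ (t:ℕ) := Nat.cast_nonneg t
        linarith
      push_cast
      rw [Finset.sum_congr rfl h2]
      simp [clamp_of_mem h0 hc.le]

lemma card_filter_equiv {α β : Type*} [Fintype α] [Fintype β] (e : α ≃ β)
    (p : β → Prop) [DecidablePred p] :
    (Finset.univ.filter (fun x => p (e x))).card = (Finset.univ.filter p).card := by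
  apply Finset.card_bij (fun x _ => e x)
  · intro x hx; simp only [Finset.mem_filter, Finset.mem_univ, true_and] at hx ⊢; exact hx
  · intro x _ y _ h; exact e.injective h
  · intro y hy
    refine ⟨e.symm y, ?_, by simp⟩
    simp only [Finset.mem_filter, Finset.mem_univ, true_and] at hy ⊢
    simpa using hy


section Comb

variable {n m k : ℕ}

def Bal (n m k : ℕ) (f : Fin m → Fin n) : Prop :=
  ∀ i, (Finset.univ.filter (fun j => f j = i)).card = k

def hc (H : Fin n → Finset (Fin m)) (f : Fin m → Fin n) (i : Fin n) : ℕ :=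
  (Finset.univ.filter (fun j => f j = i ∧ j ∈ H i)).card

def gc (H : Fin n → Finset (Fin m)) (f : Fin m → Fin n) (i i' : Fin n) : ℕ :=
  (Finset.univ.filter (fun j => f j = i' ∧ j ∈ H i)).card

def SH (H : Fin n → Finset (Fin m)) (f : Fin m → Fin n) : ℕ := ∑ i, hc H f i

def SQ (H : Fin n → Finset (Fin m)) (f : Fin m → Fin n) : ℕ := ∑ i, (hc H f i)^2

def Phi (m : ℕ) (H : Fin n → Finset (Fin m)) (f : Fin m → Fin n) : ℤ :=
  ((m^2+1) : ℤ) * SH H f - SQ H f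

lemma bal_comp {f : Fin m → Fin n} (hf : Bal n m k f) (σ : Equiv.Perm (Fin m)) :
    Bal n m k (f ∘ σ) := by
  intro i; rw [← hf i]
  exact card_filter_equiv σ (fun j => f j = i)

variable {H : Fin n → Finset (Fin m)} {f : Fin m → Fin n} {i i' : Fin n} {j j' : Fin m}

lemma hc_swap (hne : i ≠ i') (hj : f j = i') (hj' : f j' = i) (l : Fin n) :
    (hc H (f ∘ (Equiv.swap j j' : Equiv.Perm (Fin m))) l : ℤ) = (hc H f l : ℤ)
    + ((if i = l ∧ j ∈ H l then 1 else 0) + (if i' = l ∧ j' ∈ H l then 1 else 0))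
    - ((if i' = l ∧ j ∈ H l then 1 else 0) + (if i = l ∧ j' ∈ H l then 1 else 0)) := by
  classical
  have hjj' : j ≠ j' := by
    intro h; apply hne; rw [← hj, ← hj', h]
  have hcard : ∀ (g : Fin m → Fin n), (hc H g l : ℤ) =
      ∑ x : Fin m, (if g x = l ∧ x ∈ H l then (1:ℤ) else 0) := by
    intro g
    rw [hc, Finset.card_filter]
    push_cast
    rfl
  rw [hcard, hcard]
  have hmain : (∑ x : Fin m, (if (f ∘ (Equiv.swap j j' : Equiv.Perm (Fin m))) x = l ∧ x ∈ H l then (1:ℤ) else 0))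
      - (∑ x : Fin m, (if f x = l ∧ x ∈ H l then (1:ℤ) else 0))
      = ((if i = l ∧ j ∈ H l then 1 else 0) + (if i' = l ∧ j' ∈ H l then 1 else 0))
      - ((if i' = l ∧ j ∈ H l then 1 else 0) + (if i = l ∧ j' ∈ H l then 1 else 0)) := by
    rw [← Finset.sum_sub_distrib]
    have hzero : ∀ x ∈ (Finset.univ : Finset (Fin m)), x ∉ ({j, j'} : Finset (Fin m)) →
        ((if (f ∘ (Equiv.swap j j' : Equiv.Perm (Fin m))) x = l ∧ x ∈ H l then (1:ℤ) else 0)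
          - (if f x = l ∧ x ∈ H l then 1 else 0)) = 0 := by
      intro x _ hx
      simp only [Finset.mem_insert, Finset.mem_singleton, not_or] at hx
      rw [Function.comp_apply, Equiv.swap_apply_of_ne_of_ne hx.1 hx.2, sub_self]
    rw [← Finset.sum_subset (Finset.subset_univ ({j, j'} : Finset (Fin m))) hzero]
    rw [Finset.sum_pair hjj']
    simp only [Function.comp_apply, Equiv.swap_apply_left, Equiv.swap_apply_right, hj, hj']
    by_cases e1 : i = l <;> by_cases e2 : i' = l <;>
      by_cases e3 : j ∈ H l <;> by_cases e4 : j' ∈ H l <;>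
      simp [e1, e2, e3, e4]
  linarith

lemma sum_split (F : Fin n → ℤ) (hne : i ≠ i') :
    ∑ l, F l = F i + F i' + ∑ l ∈ (Finset.univ.erase i).erase i', F l := by
  rw [← Finset.add_sum_erase _ F (Finset.mem_univ i),
    ← Finset.add_sum_erase _ F (by simp [hne.symm] : i' ∈ Finset.univ.erase i)]
  ring

lemma hc_le_k (hf : Bal n m k f) (i : Fin n) : hc H f i ≤ k := by
  rw [← hf i]
  apply Finset.card_le_card
  intro x hx
  simp only [Finset.mem_filter, Finset.mem_univ, true_and] at hx ⊢
  exact hx.1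

lemma gc_le_k (hf : Bal n m k f) (i i' : Fin n) : gc H f i i' ≤ k := by
  rw [← hf i']
  apply Finset.card_le_card
  intro x hx
  simp only [Finset.mem_filter, Finset.mem_univ, true_and] at hx ⊢
  exact hx.1

lemma SH_le (hf : Bal n m k f) : SH H f ≤ n * k := by
  calc SH H f ≤ ∑ _i : Fin n, k := Finset.sum_le_sum fun i _ => hc_le_k hf i
  _ = n * k := by simp [Finset.sum_const, mul_comm]

lemma SQ_le_msq (hn : 0 < n) (hm : m = n * k) (hf : Bal n m k f) : SQ H f ≤ m^2 := by
  have h1 : SQ H f ≤ k * SH H f := by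
    rw [SH, Finset.mul_sum]
    refine Finset.sum_le_sum fun i _ => ?_
    rw [pow_two]
    exact Nat.mul_le_mul_right _ (hc_le_k hf i)
  have h2 : k * SH H f ≤ k * (n * k) := Nat.mul_le_mul_left _ (SH_le hf)
  have h3 : k ≤ m := by
    rw [hm]; exact Nat.le_mul_of_pos_left k hn
  calc SQ H f ≤ k * (n * k) := h1.trans h2
  _ = k * m := by rw [hm]
  _ ≤ m * m := Nat.mul_le_mul_right _ h3
  _ = m ^ 2 := (pow_two m).symm

lemma SH_max (hn : 0 < n) (hm : m = n * k) (hf : Bal n m k f)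
    (hmax : ∀ g, Bal n m k g → Phi m H g ≤ Phi m H f) {g : Fin m → Fin n}
    (hg : Bal n m k g) : SH H g ≤ SH H f := by
  by_contra hcon
  push_neg at hcon
  have h1 := hmax g hg
  rw [Phi, Phi] at h1
  have h2 : (SQ H g : ℤ) ≤ (m:ℤ)^2 := by exact_mod_cast (by exact_mod_cast SQ_le_msq hn hm hg : (SQ H g) ≤ m^2)
  have h3 : (0:ℤ) ≤ SQ H f := Int.natCast_nonneg _
  have h4 : (SH H f : ℤ) + 1 ≤ SH H g := by exact_mod_cast hcon
  nlinarith [h1, h2, h3, h4]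

lemma SH_split {f' : Fin m → Fin n} (hne : i ≠ i')
    (hoth : ∀ l, l ≠ i → l ≠ i' → hc H f' l = hc H f l) :
    (SH H f' : ℤ) = SH H f + ((hc H f' i : ℤ) - hc H f i) + ((hc H f' i' : ℤ) - hc H f i') := by
  have e1 : (SH H f' : ℤ) = ∑ l, (hc H f' l : ℤ) := by rw [SH]; push_cast; rfl
  have e2 : (SH H f : ℤ) = ∑ l, (hc H f l : ℤ) := by rw [SH]; push_cast; rfl
  rw [e1, e2, sum_split (fun l => (hc H f' l : ℤ)) hne, sum_split (fun l => (hc H f l : ℤ)) hne]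
  have : ∑ l ∈ (Finset.univ.erase i).erase i', (hc H f' l : ℤ)
      = ∑ l ∈ (Finset.univ.erase i).erase i', (hc H f l : ℤ) := by
    refine Finset.sum_congr rfl fun l hl => ?_
    simp only [Finset.mem_erase] at hl
    rw [hoth l hl.2.1 hl.1]
  rw [this]; ring

lemma SQ_split {f' : Fin m → Fin n} (hne : i ≠ i')
    (hoth : ∀ l, l ≠ i → l ≠ i' → hc H f' l = hc H f l) :
    (SQ H f' : ℤ) = SQ H f + ((hc H f' i : ℤ)^2 - (hc H f i : ℤ)^2)
      + ((hc H f' i' : ℤ)^2 - (hc H f i' : ℤ)^2) := by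
  have e1 : (SQ H f' : ℤ) = ∑ l, (hc H f' l : ℤ)^2 := by rw [SQ]; push_cast; rfl
  have e2 : (SQ H f : ℤ) = ∑ l, (hc H f l : ℤ)^2 := by rw [SQ]; push_cast; rfl
  rw [e1, e2, sum_split (fun l => (hc H f' l : ℤ)^2) hne,
    sum_split (fun l => (hc H f l : ℤ)^2) hne]
  have : ∑ l ∈ (Finset.univ.erase i).erase i', (hc H f' l : ℤ)^2
      = ∑ l ∈ (Finset.univ.erase i).erase i', (hc H f l : ℤ)^2 := by
    refine Finset.sum_congr rfl fun l hl => ?_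
    simp only [Finset.mem_erase] at hl
    rw [hoth l hl.2.1 hl.1]
  rw [this]; ring

lemma key (hn : 0 < n) (hm : m = n * k) (hf : Bal n m k f)
    (hmax : ∀ g, Bal n m k g → Phi m H g ≤ Phi m H f) (i i' : Fin n) :
    gc H f i i' ≤ hc H f i + 1 := by
  by_contra hcon
  push_neg at hcon
  have hne : i ≠ i' := by
    rintro rfl
    have : gc H f i i = hc H f i := rfl
    omega
  have hlow : ∃ j', f j' = i ∧ j' ∉ H i := by
    by_contra hno
    push_neg at hno
    have hsub : (Finset.univ.filter (fun j => f j = i)) ⊆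
        (Finset.univ.filter (fun j => f j = i ∧ j ∈ H i)) := by
      intro x hx
      simp only [Finset.mem_filter, Finset.mem_univ, true_and] at hx ⊢
      exact ⟨hx, hno x hx⟩
    have hk := hf i
    have hcc := Finset.card_le_card hsub
    have hgk := gc_le_k (H := H) hf i i'
    unfold hc at hcon
    omega
  obtain ⟨j', hj'f, hj'H⟩ := hlow
  have step1 : ∀ jx : Fin m, f jx = i' → jx ∈ H i → jx ∈ H i' ∧ j' ∉ H i' := by
    intro jx hjxf hjxH
    set f' := f ∘ (Equiv.swap jx j' : Equiv.Perm (Fin m)) with hf'def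
    have hbal' : Bal n m k f' := bal_comp hf _
    have hSHle : (SH H f' : ℤ) ≤ SH H f := by
      exact_mod_cast SH_max hn hm hf hmax hbal'
    have hci : (hc H f' i : ℤ) = hc H f i + 1 := by
      rw [hf'def, hc_swap hne hjxf hj'f i]
      simp [hjxH, hj'H, Ne.symm hne]
    have hci' : (hc H f' i' : ℤ) = hc H f i'
        + (if j' ∈ H i' then 1 else 0) - (if jx ∈ H i' then 1 else 0) := by
      rw [hf'def, hc_swap hne hjxf hj'f i']
      simp [hne]
    have hoth : ∀ l, l ≠ i → l ≠ i' → hc H f' l = hc H f l := by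
      intro l hl hl'
      have hz := hc_swap (H := H) hne hjxf hj'f l
      simp only [Ne.symm hl, Ne.symm hl', false_and, if_false] at hz
      rw [hf'def]
      omega
    have hSH := SH_split (H := H) hne hoth
    rw [hci, hci'] at hSH
    by_cases e1 : jx ∈ H i' <;> by_cases e2 : j' ∈ H i' <;>
      simp only [e1, e2, if_true, if_false] at hSH <;>
      [skip; exact ⟨e1, e2⟩; skip; skip] <;> linarith
  have hsub2 : gc H f i i' ≤ hc H f i' := by
    apply Finset.card_le_card
    intro x hx
    simp only [Finset.mem_filter, Finset.mem_univ, true_and] at hx ⊢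
    exact ⟨hx.1, (step1 x hx.1 hx.2).1⟩
  have hpos : 0 < gc H f i i' := by omega
  obtain ⟨j0, hj0mem⟩ := Finset.card_pos.mp hpos
  simp only [Finset.mem_filter, Finset.mem_univ, true_and] at hj0mem
  obtain ⟨hj0f, hj0Hi⟩ := hj0mem
  obtain ⟨hj0Hi', hj'Hi'⟩ := step1 j0 hj0f hj0Hi
  set f' := f ∘ (Equiv.swap j0 j' : Equiv.Perm (Fin m)) with hf'def
  have hbal' : Bal n m k f' := bal_comp hf _
  have hci : (hc H f' i : ℤ) = hc H f i + 1 := by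
    rw [hf'def, hc_swap hne hj0f hj'f i]
    simp [hj0Hi, hj'H, Ne.symm hne]
  have hci' : (hc H f' i' : ℤ) = hc H f i' - 1 := by
    rw [hf'def, hc_swap hne hj0f hj'f i']
    simp [hne, hj0Hi', hj'Hi']
  have hoth : ∀ l, l ≠ i → l ≠ i' → hc H f' l = hc H f l := by
    intro l hl hl'
    have hz := hc_swap (H := H) hne hj0f hj'f l
    simp only [Ne.symm hl, Ne.symm hl', false_and, if_false] at hz
    rw [hf'def]
    omega
  have hSH := SH_split (H := H) hne hoth
  have hSQ := SQ_split (H := H) hne hoth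
  rw [hci, hci'] at hSH hSQ
  have hphi := hmax f' hbal'
  rw [Phi, Phi] at hphi
  rw [hSH, hSQ] at hphi
  have hgchc : (hc H f i : ℤ) + 2 ≤ gc H f i i' := by exact_mod_cast hcon
  have hsub2' : (gc H f i i' : ℤ) ≤ hc H f i' := by exact_mod_cast hsub2
  nlinarith [hphi, hgchc, hsub2']

lemma SH_eq : SH H f = ∑ jg : Fin m, (if jg ∈ H (f jg) then 1 else 0) := by
  rw [SH]
  have h1 : ∀ i, hc H f i = ∑ jg : Fin m, (if f jg = i ∧ jg ∈ H i then 1 else 0) := by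
    intro i; rw [hc, Finset.card_filter]
  simp only [h1]
  rw [Finset.sum_comm]
  refine Finset.sum_congr rfl fun jg _ => ?_
  rw [Finset.sum_eq_single_of_mem (f jg) (Finset.mem_univ _)]
  · simp
  · intro i _ hne
    rw [if_neg]
    rintro ⟨h, -⟩
    exact hne h.symm

end Comb

section LP

variable {n m k : ℕ}

lemma exists_perm_le {N : Type*} [Fintype N] [DecidableEq N] (M : Matrix N N ℝ)
    (hM : M ∈ doublyStochastic ℝ N) (c : N → N → ℝ) :
    ∃ σ : Equiv.Perm N, ∑ r, ∑ j, c r j * M r j ≤ ∑ r, c r (σ r) := by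
  obtain ⟨w, hw0, hw1, hweq⟩ := exists_eq_sum_perm_of_mem_doublyStochastic hM
  set L : Matrix N N ℝ → ℝ := fun P => ∑ r, ∑ j, c r j * P r j with hL
  have hLperm : ∀ σ : Equiv.Perm N, L (σ.permMatrix ℝ) = ∑ r, c r (σ r) := by
    intro σ
    rw [hL]
    refine Finset.sum_congr rfl fun r _ => ?_
    have : ∀ j, σ.permMatrix ℝ r j = if σ r = j then 1 else 0 := by
      intro j
      simp [Equiv.Perm.permMatrix, PEquiv.toMatrix_apply, Equiv.toPEquiv_apply]
    simp only [this, mul_ite, mul_one, mul_zero]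
    rw [Finset.sum_ite_eq Finset.univ (σ r) (fun j => c r j)]
    simp
  have hLM : L M = ∑ σ : Equiv.Perm N, w σ * L (σ.permMatrix ℝ) := by
    rw [← hweq, hL]
    dsimp only
    have hrow : ∀ r, (∑ j, c r j * (∑ σ : Equiv.Perm N, w σ • σ.permMatrix ℝ) r j)
        = ∑ σ : Equiv.Perm N, w σ * ∑ j, c r j * σ.permMatrix ℝ r j := by
      intro r
      simp only [Finset.sum_apply, Matrix.sum_apply, Matrix.smul_apply, smul_eq_mul,
        Finset.mul_sum]
      rw [Finset.sum_comm]
      exact Finset.sum_congr rfl fun σ _ => Finset.sum_congr rfl fun j _ => by ring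
    rw [Finset.sum_congr rfl fun r _ => hrow r, Finset.sum_comm]
    exact Finset.sum_congr rfl fun σ _ => (Finset.mul_sum _ _ _).symm
  by_contra hcon
  push_neg at hcon
  have hlt : ∀ σ : Equiv.Perm N, L (σ.permMatrix ℝ) < L M := by
    intro σ; rw [hLperm σ]; exact hcon σ
  obtain ⟨σ0, hσ0⟩ : ∃ σ : Equiv.Perm N, 0 < w σ := by
    by_contra hno
    push_neg at hno
    have : ∀ σ : Equiv.Perm N, w σ = 0 := fun σ => le_antisymm (hno σ) (hw0 σ)
    rw [Finset.sum_congr rfl (fun σ _ => this σ)] at hw1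
    simp at hw1
  have hstrict : ∑ σ : Equiv.Perm N, w σ * L (σ.permMatrix ℝ)
      < ∑ σ : Equiv.Perm N, w σ * L M := by
    refine Finset.sum_lt_sum (fun σ _ => mul_le_mul_of_nonneg_left (hlt σ).le (hw0 σ))
      ⟨σ0, Finset.mem_univ _, mul_lt_mul_of_pos_left (hlt σ0) hσ0⟩
  rw [← hLM, ← Finset.sum_mul, hw1, one_mul] at hstrict
  exact lt_irrefl _ hstrict

lemma frac_le_integral (e : Fin n × Fin k ≃ Fin m) (H : Fin n → Finset (Fin m))
    (x : Fin n → Fin m → ℝ) (hx0 : ∀ i j, 0 ≤ x i j)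
    (hxr : ∀ i, ∑ j, x i j = (k:ℝ)) (hxc : ∀ j, ∑ i, x i j = 1) :
    ∃ f : Fin m → Fin n, Bal n m k f ∧
      ∑ i, ∑ j, (if j ∈ H i then (1:ℝ) else 0) * x i j ≤ (SH H f : ℝ) := by
  classical
  set C : Fin n → ℕ → ℝ := fun i J => ∑ j' : Fin m, if (j':ℕ) < J then x i j' else 0 with hC
  have hC0 : ∀ i, C i 0 = 0 := by intro i; simp [hC]
  have hCnn : ∀ i J, 0 ≤ C i J := by
    intro i J
    exact Finset.sum_nonneg fun j' _ => by
      by_cases h : ((j':ℕ) < J) <;> simp [h, hx0 i j']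
  have hCle : ∀ i J, C i J ≤ (k:ℝ) := by
    intro i J
    rw [← hxr i]
    exact Finset.sum_le_sum fun j' _ => by
      by_cases h : ((j':ℕ) < J) <;> simp [h, hx0 i j']
  have hCstep : ∀ i (jg : Fin m), C i ((jg:ℕ)+1) - C i (jg:ℕ) = x i jg := by
    intro i jg
    rw [hC, ← Finset.sum_sub_distrib]
    have : ∀ j' : Fin m, ((if (j':ℕ) < (jg:ℕ)+1 then x i j' else 0)
        - (if (j':ℕ) < (jg:ℕ) then x i j' else 0)) = if j' = jg then x i j' else 0 := by
      intro j'
      rcases lt_trichotomy (j':ℕ) (jg:ℕ) with h | h | h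
      · rw [if_pos (by omega), if_pos h, sub_self, if_neg (fun hq => by subst hq; omega)]
      · have : j' = jg := Fin.ext h
        subst this
        rw [if_pos (by omega), if_neg (by omega), if_pos rfl, sub_zero]
      · rw [if_neg (by omega), if_neg (by omega), if_neg (fun hq => by subst hq; omega),
          sub_self]
    rw [Finset.sum_congr rfl fun j' _ => this j']
    rw [Finset.sum_ite_eq' Finset.univ jg (fun j' => x i j')]
    simp
  have hCmono : ∀ i (jg : Fin m), C i (jg:ℕ) ≤ C i ((jg:ℕ)+1) := by
    intro i jg
    have := hCstep i jg
    have := hx0 i jg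
    linarith
  set M : Matrix (Fin m) (Fin m) ℝ := fun r jg =>
    clamp (C (e.symm r).1 ((jg:ℕ)+1) - (((e.symm r).2 : ℕ):ℝ))
      - clamp (C (e.symm r).1 (jg:ℕ) - (((e.symm r).2 : ℕ):ℝ)) with hM
  have hMsplit : ∀ (i : Fin n) (jg : Fin m), ∑ t : Fin k, M (e (i, t)) jg = x i jg := by
    intro i jg
    have hterm : ∀ t : Fin k, M (e (i, t)) jg
        = clamp (C i ((jg:ℕ)+1) - ((t:ℕ):ℝ)) - clamp (C i (jg:ℕ) - ((t:ℕ):ℝ)) := by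
      intro t; rw [hM]; simp
    rw [Finset.sum_congr rfl fun t _ => hterm t, Finset.sum_sub_distrib]
    have h1 : ∀ (c : ℝ), 0 ≤ c → c ≤ (k:ℝ) →
        ∑ t : Fin k, clamp (c - ((t:ℕ):ℝ)) = c := by
      intro c h0c h1c
      rw [Fin.sum_univ_eq_sum_range (fun tn => clamp (c - (tn:ℝ))) k]
      exact gsum k c h0c h1c
    rw [h1 _ (hCnn i _) (hCle i _), h1 _ (hCnn i _) (hCle i _), hCstep]
  have hMnn : ∀ r jg, 0 ≤ M r jg := by
    intro r jg
    rw [hM]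
    simp only [sub_nonneg]
    apply clamp_mono
    have h := hCmono (e.symm r).1 jg
    linarith
  have hMrow : ∀ r, ∑ jg, M r jg = 1 := by
    intro r
    rw [hM]
    set i := (e.symm r).1
    set t := (e.symm r).2
    rw [Fin.sum_univ_eq_sum_range
      (fun J => clamp (C i (J+1) - ((t:ℕ):ℝ)) - clamp (C i J - ((t:ℕ):ℝ))) m]
    rw [Finset.sum_range_sub (fun J => clamp (C i J - ((t:ℕ):ℝ))) m]
    have hCm : C i m = (k:ℝ) := by
      rw [hC, ← hxr i]
      exact Finset.sum_congr rfl fun j' _ => by rw [if_pos j'.isLt]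
    rw [hCm, hC0]
    have ht : ((t:ℕ):ℝ) + 1 ≤ (k:ℝ) := by
      have := t.isLt
      exact_mod_cast Nat.succ_le_of_lt this
    rw [clamp_of_one_le (by linarith), clamp_nonpos (by
      have : (0:ℝ) ≤ ((t:ℕ):ℝ) := Nat.cast_nonneg _
      linarith)]
    ring
  have hMcol : ∀ jg, ∑ r, M r jg = 1 := by
    intro jg
    rw [← Equiv.sum_comp e (fun r => M r jg), Fintype.sum_prod_type]
    rw [Finset.sum_congr rfl fun i _ => hMsplit i jg]
    exact hxc jg
  have hDS : M ∈ doublyStochastic ℝ (Fin m) := by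
    rw [mem_doublyStochastic_iff_sum]
    exact ⟨hMnn, hMrow, hMcol⟩
  set c : Fin m → Fin m → ℝ := fun r jg => if jg ∈ H (e.symm r).1 then 1 else 0 with hcdef
  obtain ⟨σ, hσ⟩ := exists_perm_le M hDS c
  refine ⟨fun jg => (e.symm (σ.symm jg)).1, ?_, ?_⟩
  · intro i
    show (Finset.univ.filter (fun jg : Fin m => (e.symm (σ.symm jg)).1 = i)).card = k
    have h1 : (Finset.univ.filter (fun jg : Fin m => (e.symm (σ.symm jg)).1 = i)).card
        = (Finset.univ.filter (fun r : Fin m => (e.symm r).1 = i)).card :=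
      card_filter_equiv (σ.symm : Fin m ≃ Fin m) (fun r => (e.symm r).1 = i)
    have h2 : (Finset.univ.filter (fun r : Fin m => (e.symm r).1 = i)).card
        = (Finset.univ.filter (fun q : Fin n × Fin k => q.1 = i)).card :=
      (card_filter_equiv (e : Fin n × Fin k ≃ Fin m) (fun r => (e.symm r).1 = i)).symm.trans
        (by
          congr 1
          apply Finset.filter_congr
          intro q _
          simp)
    have h3 : (Finset.univ.filter (fun q : Fin n × Fin k => q.1 = i))
        = {i} ×ˢ (Finset.univ : Finset (Fin k)) := by
      ext q
      simp only [Finset.mem_filter, Finset.mem_univ, true_and, Finset.mem_product,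
        Finset.mem_singleton, and_true]
    rw [h1, h2, h3, Finset.card_product]
    simp
  · have hltU : ∑ r, ∑ jg, c r jg * M r jg
        = ∑ i, ∑ jg, (if jg ∈ H i then (1:ℝ) else 0) * x i jg := by
      rw [← Equiv.sum_comp e (fun r => ∑ jg, c r jg * M r jg), Fintype.sum_prod_type]
      refine Finset.sum_congr rfl fun i _ => ?_
      rw [Finset.sum_comm]
      refine Finset.sum_congr rfl fun jg _ => ?_
      have hcval : ∀ t : Fin k, c (e (i, t)) jg = if jg ∈ H i then (1:ℝ) else 0 := by
        intro t; rw [hcdef]; simp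
      rw [Finset.sum_congr rfl fun t _ => by rw [hcval t]]
      rw [← Finset.mul_sum, hMsplit]
    have hrhs : ∑ r, c r (σ r)
        = ((SH H (fun jg => (e.symm (σ.symm jg)).1)) : ℝ) := by
      have hsh : ((SH H (fun jg => (e.symm (σ.symm jg)).1)) : ℝ)
          = ∑ jg : Fin m, (if jg ∈ H ((e.symm (σ.symm jg)).1) then (1:ℝ) else 0) := by
        rw [SH_eq, Nat.cast_sum]
        exact Finset.sum_congr rfl fun jg _ => by split <;> simp
      rw [hsh, ← Equiv.sum_comp σ.symm (fun r => c r (σ r))]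
      refine Finset.sum_congr rfl fun jg _ => ?_
      rw [hcdef]
      simp
    calc ∑ i, ∑ j, (if j ∈ H i then (1:ℝ) else 0) * x i j
        = ∑ r, ∑ jg, c r jg * M r jg := hltU.symm
      _ ≤ ∑ r, c r (σ r) := hσ
      _ = _ := hrhs

lemma bal_fst (e : Fin n × Fin k ≃ Fin m) : Bal n m k (fun jg => (e.symm jg).1) := by
  intro i
  show (Finset.univ.filter (fun jg : Fin m => (e.symm jg).1 = i)).card = k
  have h2 : (Finset.univ.filter (fun r : Fin m => (e.symm r).1 = i)).card
      = (Finset.univ.filter (fun q : Fin n × Fin k => q.1 = i)).card :=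
    (card_filter_equiv (e : Fin n × Fin k ≃ Fin m) (fun r => (e.symm r).1 = i)).symm.trans
      (by
        congr 1
        apply Finset.filter_congr
        intro q _
        simp)
  have h3 : (Finset.univ.filter (fun q : Fin n × Fin k => q.1 = i))
      = {i} ×ˢ (Finset.univ : Finset (Fin k)) := by
    ext q
    simp only [Finset.mem_filter, Finset.mem_univ, true_and, Finset.mem_product,
      Finset.mem_singleton, and_true]
  rw [h2, h3, Finset.card_product]
  simp

end LP

end Stmt10Aux

set_option maxHeartbeats 1000000 in
/-- For personalized bivalued valuations, an EF1 and fPO balanced allocation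
always exists. -/
theorem stmt10 (n m k : ℕ) (hn : 0 < n) (hm : m = n * k)
    (a b : Fin n → ℝ) (hb : ∀ i, 0 ≤ b i) (hab : ∀ i, b i < a i)
    (v : Fin n → Fin m → ℝ) (hbi : ∀ i j, v i j = a i ∨ v i j = b i) :
    ∃ A : Fin n → Finset (Fin m),
      IsBalanced n m k A ∧ IsEF1 n m v A ∧ IsFPO n m k v A := by
  classical
  let e : Fin n × Fin k ≃ Fin m := finProdFinEquiv.trans (finCongr hm.symm)
  set H : Fin n → Finset (Fin m) := fun i => Finset.univ.filter (fun j => v i j = a i)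
    with hH
  set S : Finset (Fin m → Fin n) := Finset.univ.filter (fun f => Stmt10Aux.Bal n m k f)
    with hS
  have hSne : S.Nonempty := ⟨fun jg => (e.symm jg).1, by
    simp only [hS, Finset.mem_filter, Finset.mem_univ, true_and]
    exact Stmt10Aux.bal_fst e⟩
  obtain ⟨f, hfS, hfmax⟩ := Finset.exists_max_image S (Stmt10Aux.Phi m H) hSne
  have hf : Stmt10Aux.Bal n m k f := by
    rw [hS] at hfS
    simpa using hfS
  have hmax : ∀ g, Stmt10Aux.Bal n m k g → Stmt10Aux.Phi m H g ≤ Stmt10Aux.Phi m H f := by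
    intro g hg
    exact hfmax g (by simp [hS, hg])
  set A : Fin n → Finset (Fin m) := fun i => Finset.univ.filter (fun j => f j = i) with hA
  have hmemA : ∀ i j, j ∈ A i ↔ f j = i := by intro i j; simp [hA]
  have hcardA : ∀ i, (A i).card = k := fun i => hf i
  have hvH : ∀ i j, j ∈ H i → v i j = a i := by
    intro i j hj
    rw [hH] at hj
    simpa using hj
  have hvL : ∀ i j, j ∉ H i → v i j = b i := by
    intro i j hj
    rcases hbi i j with h | h
    · exact absurd (by rw [hH]; simpa using h) hj
    · exact h
  have hbsum : ∀ (i : Fin n) (T : Finset (Fin m)), ∑ j ∈ T, v i j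
      = ((T.filter (fun j => j ∈ H i)).card : ℝ) * a i
        + ((T.filter (fun j => j ∉ H i)).card : ℝ) * b i := by
    intro i T
    rw [← Finset.sum_filter_add_sum_filter_not T (fun j => j ∈ H i)]
    congr 1
    · rw [Finset.sum_congr rfl (fun j hj => hvH i j (Finset.mem_filter.mp hj).2)]
      rw [Finset.sum_const, nsmul_eq_mul]
    · rw [Finset.sum_congr rfl (fun j hj => hvL i j (Finset.mem_filter.mp hj).2)]
      rw [Finset.sum_const, nsmul_eq_mul]
  have hfiltg : ∀ i i', (A i').filter (fun j => j ∈ H i)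
      = Finset.univ.filter (fun j => f j = i' ∧ j ∈ H i) := by
    intro i i'
    ext j
    simp [hA, Finset.filter_filter]
  have hkey : ∀ i i', ((A i').filter (fun j => j ∈ H i)).card
      ≤ ((A i).filter (fun j => j ∈ H i)).card + 1 := by
    intro i i'
    rw [hfiltg i i', hfiltg i i]
    exact Stmt10Aux.key hn hm hf hmax i i'
  have hhc : ∀ i, ((A i).filter (fun j => j ∈ H i)).card = Stmt10Aux.hc H f i := by
    intro i
    rw [hfiltg i i]
    rfl
  have hcards : ∀ i i', ((A i').filter (fun j => j ∈ H i)).card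
      + ((A i').filter (fun j => j ∉ H i)).card = k := by
    intro i i'
    rw [Finset.card_filter_add_card_filter_not, hcardA]
  refine ⟨A, ⟨?_, hcardA⟩, ?_, ?_⟩
  · intro j
    exact ⟨f j, (hmemA (f j) j).mpr rfl, fun i hi => ((hmemA i j).mp hi).symm⟩
  · -- EF1
    intro i i'
    by_cases hk0 : k = 0
    · left
      rw [← Finset.card_eq_zero, hcardA, hk0]
    · right
      have hk1 : 1 ≤ k := Nat.one_le_iff_ne_zero.mpr hk0
      have hgq := hcards i i'
      have hhqa := hcards i i
      have hkey' := hkey i i'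
      by_cases hgpos : 0 < ((A i').filter (fun j => j ∈ H i)).card
      · obtain ⟨j, hj⟩ := Finset.card_pos.mp hgpos
        have hjA : j ∈ A i' := (Finset.mem_filter.mp hj).1
        have hjH : j ∈ H i := (Finset.mem_filter.mp hj).2
        refine ⟨j, hjA, ?_⟩
        have h1 : ((A i').erase j).filter (fun j' => j' ∈ H i)
            = ((A i').filter (fun j' => j' ∈ H i)).erase j := by
          ext y
          simp only [Finset.mem_filter, Finset.mem_erase]
          tauto
        have h2 : ((A i').erase j).filter (fun j' => j' ∉ H i)
            = (A i').filter (fun j' => j' ∉ H i) := by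
          ext y
          simp only [Finset.mem_filter, Finset.mem_erase]
          constructor
          · tauto
          · intro hy
            exact ⟨⟨fun he => hy.2 (he ▸ hjH), hy.1⟩, hy.2⟩
        rw [hbsum i ((A i').erase j), hbsum i (A i), h1, h2,
          Finset.card_erase_of_mem hj]
        have hc1 : (((((A i').filter (fun j' => j' ∈ H i)).card) - 1 : ℕ) : ℝ)
            = ((((A i').filter (fun j' => j' ∈ H i)).card : ℝ)) - 1 := by
          rw [Nat.cast_sub hgpos]
          norm_num
        rw [hc1]
        have hab' := hab i
        have hbi' := hb i
        have e1 : (((A i').filter (fun j' => j' ∈ H i)).card : ℝ)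
            + (((A i').filter (fun j' => j' ∉ H i)).card : ℝ) = k := by exact_mod_cast hgq
        have e2 : (((A i).filter (fun j' => j' ∈ H i)).card : ℝ)
            + (((A i).filter (fun j' => j' ∉ H i)).card : ℝ) = k := by exact_mod_cast hhqa
        have e3 : (((A i').filter (fun j' => j' ∈ H i)).card : ℝ)
            ≤ (((A i).filter (fun j' => j' ∈ H i)).card : ℝ) + 1 := by exact_mod_cast hkey'
        nlinarith [mul_nonneg (sub_nonneg.mpr e3) (sub_nonneg.mpr hab'.le)]
      · have hg0 : ((A i').filter (fun j => j ∈ H i)).card = 0 := by omega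
        have hSne' : (A i').Nonempty := Finset.card_pos.mp (by rw [hcardA]; omega)
        obtain ⟨j, hjA⟩ := hSne'
        refine ⟨j, hjA, ?_⟩
        have hempty : (A i').filter (fun j' => j' ∈ H i) = ∅ := Finset.card_eq_zero.mp hg0
        have hjnH : ∀ y ∈ A i', y ∉ H i := by
          intro y hy hyH
          have hmem : y ∈ (A i').filter (fun j' => j' ∈ H i) :=
            Finset.mem_filter.mpr ⟨hy, hyH⟩
          rw [hempty] at hmem
          exact absurd hmem (Finset.notMem_empty y)
        have h1 : ((A i').erase j).filter (fun j' => j' ∈ H i) = ∅ := by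
          rw [Finset.eq_empty_iff_forall_notMem]
          intro y hy
          rw [Finset.mem_filter] at hy
          exact hjnH y (Finset.mem_of_mem_erase hy.1) hy.2
        have h2 : ((A i').erase j).filter (fun j' => j' ∉ H i) = (A i').erase j := by
          rw [Finset.filter_eq_self]
          intro y hy
          exact hjnH y (Finset.mem_of_mem_erase hy)
        rw [hbsum i ((A i').erase j), hbsum i (A i), h1, h2,
          Finset.card_erase_of_mem hjA, hcardA]
        simp only [Finset.card_empty, Nat.cast_zero, zero_mul, zero_add]
        have hc1 : ((k - 1 : ℕ) : ℝ) = (k:ℝ) - 1 := by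
          rw [Nat.cast_sub hk1]
          norm_num
        rw [hc1]
        have hab' := hab i
        have hbi' := hb i
        have e2 : (((A i).filter (fun j' => j' ∈ H i)).card : ℝ)
            + (((A i).filter (fun j' => j' ∉ H i)).card : ℝ) = k := by exact_mod_cast hhqa
        nlinarith [mul_nonneg
          (Nat.cast_nonneg (((A i).filter (fun j' => j' ∈ H i)).card) : (0:ℝ) ≤ _)
          (sub_nonneg.mpr hab'.le)]
  · -- fPO
    rintro ⟨x, ⟨hx0, hxr, hxc⟩, hwk, ⟨i0, hstr⟩⟩
    set w : Fin n → ℝ := fun i => (a i - b i)⁻¹ with hw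
    have hwpos : ∀ i, 0 < w i := fun i => inv_pos.mpr (sub_pos.mpr (hab i))
    have h1 : ∀ i, w i * (a i - b i) = 1 := fun i =>
      inv_mul_cancel₀ (ne_of_gt (sub_pos.mpr (hab i)))
    have hLw : ∀ i, w i * (∑ j ∈ A i, v i j)
        = (Stmt10Aux.hc H f i : ℝ) + (b i * w i) * k := by
      intro i
      rw [hbsum i (A i), hhc i]
      have e2n : Stmt10Aux.hc H f i + ((A i).filter (fun j => j ∉ H i)).card = k := by
        rw [← hhc i]
        exact hcards i i
      have e2 : (Stmt10Aux.hc H f i : ℝ)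
          + (((A i).filter (fun j => j ∉ H i)).card : ℝ) = k := by exact_mod_cast e2n
      linear_combination (Stmt10Aux.hc H f i : ℝ) * h1 i + (b i * w i) * e2
    have hRw : ∀ i, w i * (∑ j, v i j * x i j)
        = (∑ j, (if j ∈ H i then (1:ℝ) else 0) * x i j) + (b i * w i) * k := by
      intro i
      rw [Finset.mul_sum]
      have hterm : ∀ j, w i * (v i j * x i j)
          = ((if j ∈ H i then (1:ℝ) else 0) + b i * w i) * x i j := by
        intro j
        by_cases hj : j ∈ H i
        · rw [hvH i j hj, if_pos hj]
          linear_combination (x i j) * h1 i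
        · rw [hvL i j hj, if_neg hj]
          ring
      rw [Finset.sum_congr rfl fun j _ => hterm j]
      have hsplit : ∀ j : Fin m, ((if j ∈ H i then (1:ℝ) else 0) + b i * w i) * x i j
          = (if j ∈ H i then (1:ℝ) else 0) * x i j + (b i * w i) * x i j := fun j => by ring
      rw [Finset.sum_congr rfl fun j _ => hsplit j, Finset.sum_add_distrib, ← Finset.mul_sum,
        hxr i]
    have hstrict : ∑ i, w i * (∑ j ∈ A i, v i j) < ∑ i, w i * (∑ j, v i j * x i j) := by
      refine Finset.sum_lt_sum (fun i _ => mul_le_mul_of_nonneg_left (hwk i) (hwpos i).le)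
        ⟨i0, Finset.mem_univ _, mul_lt_mul_of_pos_left hstr (hwpos i0)⟩
    rw [Finset.sum_congr rfl fun i _ => hLw i, Finset.sum_congr rfl fun i _ => hRw i,
      Finset.sum_add_distrib, Finset.sum_add_distrib] at hstrict
    have hUlt : (Stmt10Aux.SH H f : ℝ)
        < ∑ i, ∑ j, (if j ∈ H i then (1:ℝ) else 0) * x i j := by
      have hcast : (Stmt10Aux.SH H f : ℝ) = ∑ i, (Stmt10Aux.hc H f i : ℝ) := by
        rw [Stmt10Aux.SH]
        push_cast
        rfl
      rw [hcast]
      linarith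
    obtain ⟨f', hbal', hle⟩ := Stmt10Aux.frac_le_integral e H x hx0 hxr hxc
    have hSHle : (Stmt10Aux.SH H f' : ℝ) ≤ (Stmt10Aux.SH H f : ℝ) := by
      exact_mod_cast Stmt10Aux.SH_max hn hm hf hmax hbal'
    linarith
end

section
/- Round-robin by price produces monotone bundle prices: let S be a set of k·n₁ goods with prices p, allocated to n₁ agents by round-robin in index order (agent i receives the goods ranked i, i+n₁, i+2n₁, ... when goods are sorted by nonincreasing price). Then p(X_1) ≥ p(X_2) ≥ ... ≥ p(X_{n₁}) ≥ p̂(X_1) ≥ p̂(X_2) ≥ ... ≥ p̂(X_{n₁}), where p(X) = ∑_{j∈X} p_j and p̂(X) = p(X) − max_{j∈X} p_j. -/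
open Finset

/-- Round-robin by nonincreasing price yields monotone bundle prices:
`p(X_1) ≥ … ≥ p(X_{n₁}) ≥ p̂(X_1) ≥ … ≥ p̂(X_{n₁})`, where (0-indexed)
agent `i` receives the goods of rank `i, i+n₁, i+2n₁, …`,
`p(X_i) = ∑_{ι<k} q(ιn₁+i)` and `p̂(X_i) = ∑_{1≤ι<k} q(ιn₁+i)` (the max-price
good of `X_i` being its rank-`i` good since `q` is nonincreasing). -/
theorem stmt12 (k n₁ : ℕ) (hn₁ : 0 < n₁) (q : ℕ → ℝ)
    (hq : ∀ t, 0 ≤ q t) (hmono : ∀ s t, s ≤ t → q t ≤ q s) :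
    (∀ i i' : ℕ, i ≤ i' → i' < n₁ →
      ∑ ι ∈ Finset.range k, q (ι * n₁ + i') ≤ ∑ ι ∈ Finset.range k, q (ι * n₁ + i)) ∧
    (∀ i i' : ℕ, i ≤ i' → i' < n₁ →
      ∑ ι ∈ Finset.Ico 1 k, q (ι * n₁ + i') ≤ ∑ ι ∈ Finset.Ico 1 k, q (ι * n₁ + i)) ∧
    (∑ ι ∈ Finset.Ico 1 k, q (ι * n₁ + 0) ≤
      ∑ ι ∈ Finset.range k, q (ι * n₁ + (n₁ - 1))) := by
  refine ⟨fun i i' h _ => Finset.sum_le_sum fun ι _ =>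
      hmono _ _ (by omega), fun i i' h _ => Finset.sum_le_sum fun ι _ =>
      hmono _ _ (by omega), ?_⟩
  have h1 : ∑ ι ∈ Finset.Ico 1 k, q (ι * n₁ + 0)
      = ∑ ι ∈ Finset.range (k - 1), q ((ι + 1) * n₁ + 0) := by
    rw [Finset.range_eq_Ico, Finset.sum_Ico_eq_sum_range]
    simp [add_comm]
  rw [h1]
  calc ∑ ι ∈ Finset.range (k - 1), q ((ι + 1) * n₁ + 0)
      ≤ ∑ ι ∈ Finset.range (k - 1), q (ι * n₁ + (n₁ - 1)) :=
        Finset.sum_le_sum fun ι _ => hmono _ _ (by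
          have : (ι + 1) * n₁ = ι * n₁ + n₁ := by ring
          omega)
    _ ≤ ∑ ι ∈ Finset.range k, q (ι * n₁ + (n₁ - 1)) :=
        Finset.sum_le_sum_of_subset_of_nonneg
          (Finset.range_subset_range.2 (by omega)) (fun _ _ _ => hq _)
end

section
/- Single-swap stability of round-robin price bounds: let S be a multiset of kn₁ good-prices and S' = S with one element j_1 replaced by another element j_2. Let X_{n₁} denote the last agent's bundle under round-robin on S, X'_{n₁} under round-robin on S', and X_1 the first agent's bundle under S. Then p(X'_{n₁}) ≥ p̂(X_1). -/
/-!
In a nonincreasing list `L`, the entry at rank `i` is the largest `x` having more than `i`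
entries `≥ x`. Replacing one element changes every such count by at most one, so the entry of
rank `m + 1` before the swap is at most the entry of rank `m` after it. The first agent's
`ι`-th good (rank `ι n₁`, `ι ≥ 1`) is therefore dominated by the last agent's `(ι-1)`-th good
(rank `ι n₁ - 1`) after the swap, and the last agent's final good only adds a nonnegative price.
-/

open Finset

namespace List

variable {α : Type*} [LinearOrder α]

theorem Pairwise.lt_countP_getElem_le {L : List α} (hL : L.Pairwise (· ≥ ·)) (i : ℕ)
    (hi : i < L.length) : i < L.countP (fun y => L[i] ≤ y) := by
  induction L generalizing i with
  | nil => simp at hi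
  | cons a t ih =>
    rw [pairwise_cons] at hL
    rw [countP_cons]
    cases i with
    | zero => simp
    | succ i =>
      have hi : i < t.length := by simpa using hi
      have hle : t[i] ≤ a := hL.1 _ (getElem_mem hi)
      have := ih hL.2 i hi
      simp only [getElem_cons_succ, hle, decide_true, if_true]
      omega

theorem Pairwise.le_getElem_of_lt_countP {L : List α} (hL : L.Pairwise (· ≥ ·)) {x : α} {m : ℕ}
    (hm : m < L.countP (fun y => x ≤ y)) : ∃ h : m < L.length, x ≤ L[m] := by
  induction L generalizing m with
  | nil => simp at hm
  | cons a t ih =>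
    rw [pairwise_cons] at hL
    cases m with
    | zero =>
      obtain ⟨y, hy, hxy⟩ := countP_pos_iff.1 hm
      refine ⟨by simp, ?_⟩
      rcases mem_cons.1 hy with rfl | hy
      · simpa using hxy
      · exact (of_decide_eq_true hxy).trans (hL.1 y hy)
    | succ m =>
      rw [countP_cons] at hm
      obtain ⟨hmt, hx⟩ := ih hL.2 (m := m) (by split at hm <;> omega)
      exact ⟨by simpa using hmt, by simpa using hx⟩

theorem le_getD_of_forall_le {L : List α} {d : α} (hd : ∀ y ∈ L, d ≤ y) (n : ℕ) :
    d ≤ L.getD n d := by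
  by_cases hn : n < L.length
  · rw [getD_eq_getElem _ _ hn]
    exact hd _ (getElem_mem hn)
  · rw [getD_eq_default _ _ (not_lt.1 hn)]

/-- `L ≤ a ::ₘ L'` says that `L'` keeps all but at most one element of `L`, so every rank moves
up by at most one position. -/
theorem getElem_succ_le_getElem_of_le_cons {L L' : List α} (hL : L.Pairwise (· ≥ ·))
    (hL' : L'.Pairwise (· ≥ ·)) {a : α} (h : (L : Multiset α) ≤ a ::ₘ L') {m : ℕ}
    (hm : m + 1 < L.length) : ∃ hm' : m < L'.length, L[m + 1] ≤ L'[m] := by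
  apply hL'.le_getElem_of_lt_countP
  have hcount := Multiset.countP_le_of_le (L[m + 1] ≤ ·) h
  rw [Multiset.countP_cons, Multiset.coe_countP, Multiset.coe_countP] at hcount
  have := hL.lt_countP_getElem_le (m + 1) hm
  split at hcount <;> omega

theorem getD_succ_le_getD_of_le_cons {L L' : List α} (hL : L.Pairwise (· ≥ ·))
    (hL' : L'.Pairwise (· ≥ ·)) {a : α} (h : (L : Multiset α) ≤ a ::ₘ L') {d : α}
    (hd : ∀ y ∈ L', d ≤ y) (m : ℕ) : L.getD (m + 1) d ≤ L'.getD m d := by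
  by_cases hm : m + 1 < L.length
  · obtain ⟨hm', hle⟩ := getElem_succ_le_getElem_of_le_cons hL hL' h hm
    rwa [getD_eq_getElem _ _ hm, getD_eq_getElem _ _ hm']
  · rw [getD_eq_default _ _ (not_lt.1 hm)]
    exact le_getD_of_forall_le hd m

end List

theorem stmt14_general (k n₁ : ℕ) (hn₁ : 0 < n₁)
    (S : Multiset ℝ)
    (hSnn : ∀ x ∈ S, (0:ℝ) ≤ x)
    (j₁ j₂ : ℝ) (hj₁ : j₁ ∈ S) (hj₂ : 0 ≤ j₂)
    (L L' : List ℝ)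
    (hLsort : L.Pairwise (· ≥ ·)) (hL : (L : Multiset ℝ) = S)
    (hL'sort : L'.Pairwise (· ≥ ·)) (hL' : (L' : Multiset ℝ) = j₂ ::ₘ S.erase j₁) :
    ∑ ι ∈ Finset.Ico 1 k, L.getD (ι * n₁ + 0) 0 ≤
      ∑ ι ∈ Finset.range k, L'.getD (ι * n₁ + (n₁ - 1)) 0 := by
  have hsub : (L : Multiset ℝ) ≤ j₁ ::ₘ L' := by
    rw [hL, hL']
    calc S = j₁ ::ₘ S.erase j₁ := (Multiset.cons_erase hj₁).symm
      _ ≤ j₁ ::ₘ j₂ ::ₘ S.erase j₁ := Multiset.cons_le_cons _ (Multiset.le_cons_self _ _)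
  have hL'nn : ∀ y ∈ L', (0 : ℝ) ≤ y := by
    intro y hy
    rcases Multiset.mem_cons.1 (hL' ▸ Multiset.mem_coe.2 hy) with rfl | hy
    · exact hj₂
    · exact hSnn y (Multiset.mem_of_mem_erase hy)
  calc ∑ ι ∈ Ico 1 k, L.getD (ι * n₁ + 0) 0
      = ∑ ι ∈ range (k - 1), L.getD ((1 + ι) * n₁ + 0) 0 :=
        sum_Ico_eq_sum_range _ _ _
    _ ≤ ∑ ι ∈ range (k - 1), L'.getD (ι * n₁ + (n₁ - 1)) 0 := by
        refine sum_le_sum fun ι _ => ?_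
        have hidx : (1 + ι) * n₁ + 0 = ι * n₁ + (n₁ - 1) + 1 := by
          rw [add_mul, one_mul]; omega
        rw [hidx]
        exact List.getD_succ_le_getD_of_le_cons hLsort hL'sort hsub hL'nn _
    _ ≤ ∑ ι ∈ range k, L'.getD (ι * n₁ + (n₁ - 1)) 0 :=
        sum_le_sum_of_subset_of_nonneg (range_subset_range.2 (Nat.sub_le k 1))
          fun ι _ _ => List.le_getD_of_forall_le hL'nn _

/-- Single-swap stability of round-robin price bounds: if `S'` is obtained
from the multiset of prices `S` (of size `k·n₁`) by replacing one element
`j₁ ∈ S` with `j₂`, and `L`, `L'` are the nonincreasing sorted lists of `S`,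
`S'`, then the last agent's bundle price under `S'` is at least
`p̂(X_1) = p(X_1) − max X_1` under `S`. -/
theorem stmt14 (k n₁ : ℕ) (hn₁ : 0 < n₁)
    (S : Multiset ℝ) (hcard : Multiset.card S = k * n₁)
    (hSnn : ∀ x ∈ S, (0:ℝ) ≤ x)
    (j₁ j₂ : ℝ) (hj₁ : j₁ ∈ S) (hj₂ : 0 ≤ j₂)
    (L L' : List ℝ)
    (hLsort : L.Pairwise (· ≥ ·)) (hL : (L : Multiset ℝ) = S)
    (hL'sort : L'.Pairwise (· ≥ ·)) (hL' : (L' : Multiset ℝ) = j₂ ::ₘ S.erase j₁) :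
    ∑ ι ∈ Finset.Ico 1 k, L.getD (ι * n₁ + 0) 0 ≤
      ∑ ι ∈ Finset.range k, L'.getD (ι * n₁ + (n₁ - 1)) 0 :=
  stmt14_general k n₁ hn₁ S hSnn j₁ j₂ hj₁ hj₂ L L' hLsort hL hL'sort hL'
end

section
/- Swap step preserves one-sided price-EF1 in the two-types algorithm: with partition (S, T) of M, round-robin bundles (X_1,...,X_{n₁}) for S and (Y_1,...,Y_{n₂}) for T with respect to nonnegative prices p, suppose j_1 ∈ S and j_2 ∈ T are swapped to form (S', T') = (S\{j_1}∪{j_2}, T\{j_2}∪{j_1}) with resulting round-robin bundles (X'_i) and (Y'_i). If p(Y_{n₂}) < p̂(X_1), then p(X'_{n₁}) ≥ p̂(Y'_1). -/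
/-!
Sort the prices of `S` and `S'` in nonincreasing order. Since `S'` arises from `S` by replacing a
single element, the two sorted lists share a common sublist missing just one entry of each, so
(counting ranks from 0) the good of rank `i + 1` in `S` is worth at most the good of rank `i` in
`S'`. Under round robin the `ι`-th good of agent 1 has rank `ι n₁` and the `(ι - 1)`-th good of
agent `n₁` has rank `ι n₁ - 1`, hence `p̂(X_1) ≤ p(X'_{n₁})`; symmetrically `p̂(Y'_1) ≤ p(Y_{n₂})`,
and the hypothesis `p(Y_{n₂}) < p̂(X_1)` chains the two.
-/

open Finset

namespace List

variable {α : Type*}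

section Preorder

variable [Preorder α] {d : α}

theorem le_getD_of_forall_le_s15 {A : List α} (hA : ∀ x ∈ A, d ≤ x) (i : ℕ) : d ≤ A.getD i d := by
  rcases lt_or_ge i A.length with h | h
  · rw [getD_eq_getElem _ _ h]; exact hA _ (getElem_mem h)
  · rw [getD_eq_default _ _ h]

theorem getD_antitone_of_pairwise_ge {A : List α} (hsort : A.Pairwise (· ≥ ·))
    (hA : ∀ x ∈ A, d ≤ x) : Antitone fun i => A.getD i d := by
  intro i j hij
  rcases lt_or_ge j A.length with hj | hj
  · have hi : i < A.length := hij.trans_lt hj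
    simp only [getD_eq_getElem _ _ hi, getD_eq_getElem _ _ hj]
    rcases hij.eq_or_lt with rfl | hlt
    · exact le_rfl
    · exact hsort.rel_get_of_lt (a := ⟨i, hi⟩) (b := ⟨j, hj⟩) hlt
  · simp only [getD_eq_default _ _ hj]; exact le_getD_of_forall_le_s15 hA i

theorem getD_le_getD_cons {a : α} {A : List α} (hsort : (a :: A).Pairwise (· ≥ ·))
    (hA : ∀ x ∈ a :: A, d ≤ x) (i : ℕ) : A.getD i d ≤ (a :: A).getD i d := by
  cases i with
  | zero => cases A with
    | nil => exact hA a mem_cons_self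
    | cons b _ => exact rel_of_pairwise_cons hsort mem_cons_self
  | succ i =>
    exact getD_antitone_of_pairwise_ge hsort.of_cons (fun x hx => hA x (mem_cons_of_mem _ hx))
      i.le_succ

theorem Sublist.getD_le_getD {E A : List α} (h : E <+ A) (hsort : A.Pairwise (· ≥ ·))
    (hA : ∀ x ∈ A, d ≤ x) (i : ℕ) : E.getD i d ≤ A.getD i d := by
  induction h generalizing i with
  | slnil => rfl
  | cons a _ ih =>
    exact (ih hsort.of_cons (fun x hx => hA x (mem_cons_of_mem _ hx)) i).trans
      (getD_le_getD_cons hsort hA i)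
  | cons_cons a _ ih =>
    cases i with
    | zero => rfl
    | succ i => exact ih hsort.of_cons (fun x hx => hA x (mem_cons_of_mem _ hx)) i

theorem Sublist.getD_succ_le_getD {E A : List α} (h : E <+ A) (hsort : A.Pairwise (· ≥ ·))
    (hlen : A.length = E.length + 1) (i : ℕ) : A.getD (i + 1) d ≤ E.getD i d := by
  induction h generalizing i with
  | slnil => simp at hlen
  | cons a h _ =>
    rw [h.eq_of_length (by simpa using hlen.symm), getD_cons_succ]
  | @cons_cons E₁ A₁ a _ ih =>
    cases i with
    | zero => cases A₁ with
      | nil => simp at hlen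
      | cons b _ => exact rel_of_pairwise_cons hsort mem_cons_self
    | succ i => exact ih hsort.of_cons (by simpa using hlen) i

theorem getD_succ_le_getD_of_common_sublist {E A B : List α} (hEA : E <+ A)
    (hEB : E <+ B)
    (hA : A.Pairwise (· ≥ ·)) (hB : B.Pairwise (· ≥ ·)) (hlen : A.length = E.length + 1)
    (hBd : ∀ x ∈ B, d ≤ x) (i : ℕ) : A.getD (i + 1) d ≤ B.getD i d :=
  (hEA.getD_succ_le_getD hA hlen i).trans (hEB.getD_le_getD hB hBd i)

end Preorder

theorem exists_sublist_sublist_of_coe_eq_cons_erase [LinearOrder α] {L L' : List α}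
    (hL : L.Pairwise (· ≥ ·)) (hL' : L'.Pairwise (· ≥ ·)) {x y : α} (hy : y ∈ L)
    (h : (L' : Multiset α) = x ::ₘ (L : Multiset α).erase y) :
    ∃ E : List α, E <+ L ∧ E <+ L' ∧ L.length = E.length + 1 ∧ L'.length = E.length + 1 := by
  obtain ⟨s, t, rfl⟩ := append_of_mem hy
  have hsub : s ++ t <+ s ++ y :: t := (sublist_cons_self y t).append_left s
  rw [Multiset.coe_eq_coe.mpr perm_middle, ← Multiset.cons_coe, Multiset.erase_cons_head,
    Multiset.cons_coe, Multiset.coe_eq_coe] at h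
  refine ⟨s ++ t, hsub, ?_, by simp [Nat.add_assoc], by simp [h.length_eq]⟩
  exact sublist_of_subperm_of_pairwise ((sublist_cons_self x _).subperm.trans h.symm.subperm)
    (hL.sublist hsub) hL'

end List

theorem sum_Ico_getD_le_sum_range_getD {α : Type*} [AddCommMonoid α] [PartialOrder α]
    [IsOrderedAddMonoid α] {A B : List α} (hB : ∀ x ∈ B, 0 ≤ x)
    (hshift : ∀ i, A.getD (i + 1) 0 ≤ B.getD i 0) {n : ℕ} (hn : 0 < n) (k : ℕ) :
    ∑ ι ∈ Ico 1 k, A.getD (ι * n + 0) 0 ≤ ∑ ι ∈ range k, B.getD (ι * n + (n - 1)) 0 :=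
  calc ∑ ι ∈ Ico 1 k, A.getD (ι * n + 0) 0
      = ∑ i ∈ range (k - 1), A.getD (i * n + (n - 1) + 1) 0 := by
        rw [sum_Ico_eq_sum_range]
        refine sum_congr rfl fun i _ => ?_
        congr 1
        rw [add_mul, one_mul, add_zero, add_assoc, Nat.sub_add_cancel hn, add_comm]
    _ ≤ ∑ i ∈ range (k - 1), B.getD (i * n + (n - 1)) 0 := sum_le_sum fun i _ => hshift _
    _ ≤ ∑ i ∈ range k, B.getD (i * n + (n - 1)) 0 :=
        sum_le_sum_of_subset_of_nonneg (range_subset_range.mpr (k.sub_le 1))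
          fun _ _ _ => List.le_getD_of_forall_le_s15 hB _

theorem stmt15_general (k n₁ n₂ : ℕ) (hn₁ : 0 < n₁) (hn₂ : 0 < n₂)
    (S T : Multiset ℝ)
    (hSnn : ∀ x ∈ S, (0:ℝ) ≤ x) (hTnn : ∀ x ∈ T, (0:ℝ) ≤ x)
    (j₁ j₂ : ℝ) (hj₁ : j₁ ∈ S) (hj₂ : j₂ ∈ T)
    (LS LT LS' LT' : List ℝ)
    (hLSsort : LS.Pairwise (· ≥ ·)) (hLS : (LS : Multiset ℝ) = S)
    (hLTsort : LT.Pairwise (· ≥ ·)) (hLT : (LT : Multiset ℝ) = T)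
    (hLS'sort : LS'.Pairwise (· ≥ ·)) (hLS' : (LS' : Multiset ℝ) = j₂ ::ₘ S.erase j₁)
    (hLT'sort : LT'.Pairwise (· ≥ ·)) (hLT' : (LT' : Multiset ℝ) = j₁ ::ₘ T.erase j₂)
    (hlt : ∑ ι ∈ Finset.range k, LT.getD (ι * n₂ + (n₂ - 1)) 0 <
      ∑ ι ∈ Finset.Ico 1 k, LS.getD (ι * n₁ + 0) 0) :
    ∑ ι ∈ Finset.Ico 1 k, LT'.getD (ι * n₂ + 0) 0 ≤
      ∑ ι ∈ Finset.range k, LS'.getD (ι * n₁ + (n₁ - 1)) 0 := by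
  subst hLS hLT
  obtain ⟨E, hES, hES', hlenS, -⟩ :=
    List.exists_sublist_sublist_of_coe_eq_cons_erase hLSsort hLS'sort hj₁ hLS'
  obtain ⟨F, hFT, hFT', -, hlenT'⟩ :=
    List.exists_sublist_sublist_of_coe_eq_cons_erase hLTsort hLT'sort hj₂ hLT'
  have hLS'nn : ∀ x ∈ LS', 0 ≤ x := by
    intro x hx
    rw [← Multiset.mem_coe, hLS', Multiset.mem_cons] at hx
    rcases hx with rfl | hx
    · exact hTnn x hj₂
    · exact hSnn x (Multiset.mem_of_mem_erase hx)
  have hS := List.getD_succ_le_getD_of_common_sublist hES hES' hLSsort hLS'sort hlenS hLS'nn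
  have hT := List.getD_succ_le_getD_of_common_sublist hFT' hFT hLT'sort hLTsort hlenT' hTnn
  calc ∑ ι ∈ Ico 1 k, LT'.getD (ι * n₂ + 0) 0
      ≤ ∑ ι ∈ range k, LT.getD (ι * n₂ + (n₂ - 1)) 0 :=
        sum_Ico_getD_le_sum_range_getD hTnn hT hn₂ k
    _ ≤ ∑ ι ∈ Ico 1 k, LS.getD (ι * n₁ + 0) 0 := hlt.le
    _ ≤ ∑ ι ∈ range k, LS'.getD (ι * n₁ + (n₁ - 1)) 0 :=
        sum_Ico_getD_le_sum_range_getD hLS'nn hS hn₁ k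

/-- Swap step preserves one-sided price-EF1: with price multisets `S` (size
`k·n₁`, for type-1 agents) and `T` (size `k·n₂`, for type-2 agents), swap
`j₁ ∈ S` with `j₂ ∈ T` to get `S'`, `T'`. With round-robin by nonincreasing
price (sorted lists `LS, LT, LS', LT'`), if `p(Y_{n₂}) < p̂(X_1)` then
`p(X'_{n₁}) ≥ p̂(Y'_1)`. -/
theorem stmt15 (k n₁ n₂ : ℕ) (hn₁ : 0 < n₁) (hn₂ : 0 < n₂)
    (S T : Multiset ℝ)
    (hScard : Multiset.card S = k * n₁) (hTcard : Multiset.card T = k * n₂)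
    (hSnn : ∀ x ∈ S, (0:ℝ) ≤ x) (hTnn : ∀ x ∈ T, (0:ℝ) ≤ x)
    (j₁ j₂ : ℝ) (hj₁ : j₁ ∈ S) (hj₂ : j₂ ∈ T)
    (LS LT LS' LT' : List ℝ)
    (hLSsort : LS.Pairwise (· ≥ ·)) (hLS : (LS : Multiset ℝ) = S)
    (hLTsort : LT.Pairwise (· ≥ ·)) (hLT : (LT : Multiset ℝ) = T)
    (hLS'sort : LS'.Pairwise (· ≥ ·)) (hLS' : (LS' : Multiset ℝ) = j₂ ::ₘ S.erase j₁)
    (hLT'sort : LT'.Pairwise (· ≥ ·)) (hLT' : (LT' : Multiset ℝ) = j₁ ::ₘ T.erase j₂)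
    (hlt : ∑ ι ∈ Finset.range k, LT.getD (ι * n₂ + (n₂ - 1)) 0 <
      ∑ ι ∈ Finset.Ico 1 k, LS.getD (ι * n₁ + 0) 0) :
    ∑ ι ∈ Finset.Ico 1 k, LT'.getD (ι * n₂ + 0) 0 ≤
      ∑ ι ∈ Finset.range k, LS'.getD (ι * n₁ + (n₁ - 1)) 0 :=
  stmt15_general k n₁ n₂ hn₁ hn₂ S T hSnn hTnn j₁ j₂ hj₁ hj₂ LS LT LS' LT' hLSsort hLS hLTsort hLT
    hLS'sort hLS' hLT'sort hLT' hlt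
end

section
/- In the two-types setting, for sufficiently small γ = δ (below all critical ratios), any balanced allocation A maximizing ∑_{i∈N₁} u_1(A_i) + δ·∑_{i∈N₂} u_2(A_i) assigns the type-1 agents a set S of goods such that u_{1j} ≥ u_{1j'} for every j ∈ S and j' ∈ M \ S; consequently no type-1 agent envies any type-2 agent. -/
open Finset

/-- In the two-types setting, at the smallest weight `δ` (below all critical
ratios), any balanced allocation maximizing
`∑_{i∈N₁} u₁(A_i) + δ·∑_{i∈N₂} u₂(A_i)` gives type-1 agents only goods that
are weakly `u₁`-preferred to every good held by a type-2 agent; consequently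
no type-1 agent envies any type-2 agent. -/
theorem stmt17 (n m k : ℕ) (hm : m = n * k)
    (t : Fin n → Fin 2) (u : Fin 2 → Fin m → ℝ) (hu : ∀ s j, 0 ≤ u s j)
    (hne : ∃ (s : Fin 2) (j j' : Fin m), u s j ≠ u s j')
    (δ : ℝ)
    (hδ : δ = sInf {d : ℝ | ∃ (s : Fin 2) (j j' : Fin m),
        u s j ≠ u s j' ∧ d = |u s j - u s j'|} /
      (1 + sSup {c : ℝ | ∃ (s : Fin 2) (j : Fin m), c = u s j}))
    (A : Fin n → Finset (Fin m)) (hA : IsBalanced n m k A)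
    (hopt : ∀ B : Fin n → Finset (Fin m), IsBalanced n m k B →
      ∑ i : Fin n, (if t i = 0 then (1:ℝ) else δ) * ∑ j ∈ B i, u (t i) j ≤
        ∑ i : Fin n, (if t i = 0 then (1:ℝ) else δ) * ∑ j ∈ A i, u (t i) j) :
    (∀ (i i' : Fin n) (j j' : Fin m), t i = 0 → t i' = 1 →
      j ∈ A i → j' ∈ A i' → u 0 j' ≤ u 0 j) ∧
    (∀ i i' : Fin n, t i = 0 → t i' = 1 →
      ∑ j ∈ A i', u 0 j ≤ ∑ j ∈ A i, u 0 j) := by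
  classical
  -- set up S1 (gaps) and S2 (values)
  set S1 : Set ℝ := {d : ℝ | ∃ (s : Fin 2) (j j' : Fin m),
      u s j ≠ u s j' ∧ d = |u s j - u s j'|} with hS1
  set S2 : Set ℝ := {c : ℝ | ∃ (s : Fin 2) (j : Fin m), c = u s j} with hS2
  set ε : ℝ := sInf S1 with hε
  set M : ℝ := sSup S2 with hM
  have hS1fin : S1.Finite := by
    apply Set.Finite.subset (Set.finite_range
      (fun p : Fin 2 × Fin m × Fin m => |u p.1 p.2.1 - u p.1 p.2.2|))
    rintro d ⟨s, j, j', -, rfl⟩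
    exact ⟨⟨s, j, j'⟩, rfl⟩
  have hS2fin : S2.Finite := by
    apply Set.Finite.subset (Set.finite_range
      (fun p : Fin 2 × Fin m => u p.1 p.2))
    rintro c ⟨s, j, rfl⟩
    exact ⟨⟨s, j⟩, rfl⟩
  obtain ⟨s₀, j₀, j₀', hne0⟩ := hne
  have hS1ne : S1.Nonempty := ⟨_, s₀, j₀, j₀', hne0, rfl⟩
  have hεmem : ε ∈ S1 := Set.Nonempty.csInf_mem hS1ne hS1fin
  have hεpos : 0 < ε := by
    obtain ⟨s, j, j', hne', h⟩ := hεmem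
    rw [h]
    exact abs_pos.mpr (sub_ne_zero.mpr hne')
  have hεle : ∀ d ∈ S1, ε ≤ d := fun d hd => csInf_le hS1fin.bddBelow hd
  have hMle : ∀ s j, u s j ≤ M := fun s j =>
    le_csSup hS2fin.bddAbove ⟨s, j, rfl⟩
  have hM0 : 0 ≤ M := le_trans (hu 0 j₀) (hMle 0 j₀)
  have hδpos : 0 < δ := by
    rw [hδ]
    exact div_pos hεpos (by linarith)
  have hδM : δ * (1 + M) = ε := by
    rw [hδ]; field_simp
  -- part 1
  have key : ∀ (i i' : Fin n) (j j' : Fin m), t i = 0 → t i' = 1 →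
      j ∈ A i → j' ∈ A i' → u 0 j' ≤ u 0 j := by
    intro i i' j j' ht0 ht1 hji hji'
    by_contra hlt
    push_neg at hlt
    have hii' : i ≠ i' := by
      intro h; rw [h, ht1] at ht0; exact absurd ht0 (by decide)
    have hjj' : j ≠ j' := by
      intro h
      exact hii' ((hA.1 j).unique hji (h ▸ hji'))
    have hj'ni : j' ∉ A i := fun h => hii' ((hA.1 j').unique h hji')
    have hjni' : j ∉ A i' := fun h => hii' ((hA.1 j).unique hji h)
    set B : Fin n → Finset (Fin m) := fun x =>
      if x = i then insert j' ((A i).erase j)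
      else if x = i' then insert j ((A i').erase j') else A x with hB
    have hBi : B i = insert j' ((A i).erase j) := by simp [hB]
    have hBi' : B i' = insert j ((A i').erase j') := by
      simp [hB, hii'.symm]
    have hBo : ∀ x, x ≠ i → x ≠ i' → B x = A x := by
      intro x h1 h2; simp [hB, h1, h2]
    have hk1 : 1 ≤ k := by
      have := hA.2 i
      have : 0 < (A i).card := Finset.card_pos.mpr ⟨j, hji⟩
      omega
    have hmemB : ∀ (x : Fin n) (a : Fin m), a ∈ B x ↔
        (if a = j then x = i' else if a = j' then x = i else a ∈ A x) := by
      intro x a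
      by_cases hxi : x = i
      · rw [hxi, hBi]
        by_cases haj : a = j
        · rw [haj, if_pos rfl]
          exact iff_of_false (by simp [hjj']) hii'
        · by_cases haj' : a = j'
          · rw [haj', if_neg (Ne.symm hjj'), if_pos rfl]
            exact iff_of_true (Finset.mem_insert_self _ _) rfl
          · rw [if_neg haj, if_neg haj']
            simp [Finset.mem_insert, Finset.mem_erase, haj, haj']
      · by_cases hxi' : x = i'
        · rw [hxi', hBi']
          by_cases haj : a = j
          · rw [haj, if_pos rfl]
            exact iff_of_true (Finset.mem_insert_self _ _) rfl
          · by_cases haj' : a = j'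
            · rw [haj', if_neg (Ne.symm hjj'), if_pos rfl]
              exact iff_of_false (by simp [Ne.symm hjj']) (Ne.symm hii')
            · rw [if_neg haj, if_neg haj']
              simp [Finset.mem_insert, Finset.mem_erase, haj, haj']
        · rw [hBo x hxi hxi']
          by_cases haj : a = j
          · rw [haj, if_pos rfl]
            exact iff_of_false (fun h => hxi ((hA.1 j).unique h hji)) hxi'
          · by_cases haj' : a = j'
            · rw [haj', if_neg (Ne.symm hjj'), if_pos rfl]
              exact iff_of_false (fun h => hxi' ((hA.1 j').unique h hji')) hxi
            · rw [if_neg haj, if_neg haj']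
    have hBbal : IsBalanced n m k B := by
      constructor
      · intro a
        by_cases haj : a = j
        · refine ⟨i', (hmemB i' a).mpr (by simp [haj]), fun y hy => ?_⟩
          have hy' := (hmemB y a).mp hy
          simpa [haj] using hy'
        · by_cases haj' : a = j'
          · refine ⟨i, (hmemB i a).mpr (by simp [haj', Ne.symm hjj']),
              fun y hy => ?_⟩
            have hy' := (hmemB y a).mp hy
            simpa [haj', Ne.symm hjj'] using hy'
          · obtain ⟨x₀, hx₀, hx₀u⟩ := hA.1 a
            refine ⟨x₀, (hmemB x₀ a).mpr (by simpa [haj, haj'] using hx₀),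
              fun y hy => ?_⟩
            have hy' := (hmemB y a).mp hy
            exact hx₀u y (by simpa [haj, haj'] using hy')
      · intro x
        by_cases hxi : x = i
        · rw [hxi, hBi, Finset.card_insert_of_notMem
              (fun h => hj'ni (Finset.mem_of_mem_erase h)),
            Finset.card_erase_of_mem hji, hA.2 i]
          omega
        · by_cases hxi' : x = i'
          · rw [hxi', hBi', Finset.card_insert_of_notMem
                (fun h => hjni' (Finset.mem_of_mem_erase h)),
              Finset.card_erase_of_mem hji', hA.2 i']
            omega
          · rw [hBo x hxi hxi']; exact hA.2 x
    -- objective difference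
    set F : (Fin n → Finset (Fin m)) → Fin n → ℝ :=
      fun C x => (if t x = 0 then (1:ℝ) else δ) * ∑ jj ∈ C x, u (t x) jj
      with hF
    have hFi : F B i = F A i + (u 0 j' - u 0 j) := by
      simp only [hF, ht0, hBi, eq_self_iff_true, if_true]
      rw [
        Finset.sum_insert (fun h => hj'ni (Finset.mem_of_mem_erase h)),
        Finset.sum_erase_eq_sub hji]
      ring
    have hFi' : F B i' = F A i' + δ * (u 1 j - u 1 j') := by
      simp only [hF, ht1, hBi']
      rw [if_neg (show ¬((1:Fin 2) = 0) by decide),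
        Finset.sum_insert (fun h => hjni' (Finset.mem_of_mem_erase h)),
        Finset.sum_erase_eq_sub hji']
      ring
    have hdiff : ∑ x : Fin n, F B x = ∑ x : Fin n, F A x
        + ((u 0 j' - u 0 j) + δ * (u 1 j - u 1 j')) := by
      have h1 : ∑ x : Fin n, (F B x - F A x)
          = ∑ x ∈ ({i, i'} : Finset (Fin n)), (F B x - F A x) := by
        symm
        apply Finset.sum_subset (Finset.subset_univ _)
        intro x _ hx
        simp only [Finset.mem_insert, Finset.mem_singleton, not_or] at hx
        simp only [hF]
        rw [hBo x hx.1 hx.2]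
        ring
      rw [Finset.sum_sub_distrib, Finset.sum_pair hii', hFi, hFi'] at h1
      linarith
    have hle := hopt B hBbal
    have hεle' : ε ≤ u 0 j' - u 0 j := by
      have hmem : |u 0 j - u 0 j'| ∈ S1 :=
        ⟨0, j, j', ne_of_lt hlt, rfl⟩
      have := hεle _ hmem
      rw [abs_sub_comm, abs_of_pos (by linarith)] at this
      linarith
    have h2 : δ * (u 1 j - u 1 j') ≥ -(δ * M) := by
      have h3 : u 1 j' ≤ M := hMle 1 j'
      have h4 : 0 ≤ u 1 j := hu 1 j
      nlinarith
    have : (0:ℝ) < (u 0 j' - u 0 j) + δ * (u 1 j - u 1 j') := by nlinarith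
    simp only [hF] at hdiff
    linarith [hle, hdiff]
  refine ⟨key, ?_⟩
  intro i i' ht0 ht1
  rcases Nat.eq_zero_or_pos k with hk | hk
  · have : A i' = ∅ := Finset.card_eq_zero.mp (by rw [hA.2 i', hk])
    rw [this]
    simp
    exact Finset.sum_nonneg (fun j _ => hu 0 j)
  · have hne1 : (A i).Nonempty := Finset.card_pos.mp (by rw [hA.2 i]; exact hk)
    have hne2 : (A i').Nonempty := Finset.card_pos.mp (by rw [hA.2 i']; exact hk)
    obtain ⟨j₁, hj₁, hj₁max⟩ := Finset.exists_mem_eq_sup' hne2 (u 0)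
    have h1 : ∑ j ∈ A i', u 0 j ≤ (A i').card • ((A i').sup' hne2 (u 0)) :=
      Finset.sum_le_card_nsmul _ _ _ (fun x hx => Finset.le_sup' (u 0) hx)
    have h2 : (A i).card • ((A i').sup' hne2 (u 0)) ≤ ∑ j ∈ A i, u 0 j :=
      Finset.card_nsmul_le_sum _ _ _ (fun x hx => by
        rw [hj₁max]
        exact key i i' x j₁ ht0 ht1 hx hj₁)
    rw [hA.2 i'] at h1
    rw [hA.2 i] at h2
    linarith
end
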